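/- arXiv:2503.14080 — 6 statements merged into one kernel-verified Lean document; each statement's English description precedes it below -/
import Mathlib

section
/- Let f_i(x) = (1/2) a_i x² + b_i x + c_i for i = 1,2,3 with a_2 < a_1 < a_3, and let p_i be the unique critical point of f_{i+1} - f_i (indices mod 3). Then there exists exactly one continuous map I from the tripod tree (three half-infinite edges e_1, e_2, e_3 each isometric to (-∞,0], glued at 0) to ℝ such that on each edge e_i, I satisfies dI/dt = -(f_{i+1} - f_i)'(I(t)), I(t) → p_i as t → -∞, and I(0) is the same point for all three edges; moreover the common value I(0) equals p_2. Explicitly, I restricted to e_1 is t ↦ (p_2 - p_1)e^{-(a_2-a_1)t} + p_1, to e_2 is the constant p_2, and to e_3 is t ↦ (p_2 - p_3)e^{-(a_1-a_3)t} + p_3. -/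
lemma quad_deriv (a b c x : ℝ) :
    HasDerivAt (fun x : ℝ => (1/2) * a * x ^ 2 + b * x + c) (a * x + b) x := by
  have h := (((hasDerivAt_pow 2 x).const_mul ((1/2)*a)).add
    ((hasDerivAt_id x).const_mul b)).add_const c
  simp only [id_eq] at h
  refine h.congr_deriv ?_
  push_cast; ring

lemma deriv_quad (a b c a' b' c' x : ℝ) :
    deriv (fun x : ℝ => ((1/2) * a * x ^ 2 + b * x + c) - ((1/2) * a' * x ^ 2 + b' * x + c')) x
      = (a - a') * x + (b - b') := by
  have h := (quad_deriv a b c x).sub (quad_deriv a' b' c' x)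
  have h2 : HasDerivAt (fun x : ℝ => ((1/2) * a * x ^ 2 + b * x + c) - ((1/2) * a' * x ^ 2 + b' * x + c'))
      ((a - a') * x + (b - b')) x := by refine h.congr_deriv ?_; ring
  exact h2.deriv

lemma explicit_deriv (C α p t : ℝ) :
    HasDerivAt (fun t : ℝ => C * Real.exp (-α * t) + p)
      (-(α * ((C * Real.exp (-α * t) + p) - p))) t := by
  have h := (((Real.hasDerivAt_exp (-α * t)).comp t
    ((hasDerivAt_id t).const_mul (-α))).const_mul C).add_const p
  simp only [id_eq, Function.comp_def] at h
  refine h.congr_deriv ?_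
  ring

lemma sol_repr {y : ℝ → ℝ} {α p : ℝ}
    (hy : ∀ t, HasDerivAt y (-(α * (y t - p))) t) (t : ℝ) :
    y t = (y 0 - p) * Real.exp (-α * t) + p := by
  set g : ℝ → ℝ := fun t => (y t - p) * Real.exp (α * t) with hg
  have hgd : ∀ t, HasDerivAt g 0 t := by
    intro t
    have h1 : HasDerivAt (fun t => y t - p) (-(α * (y t - p))) t := (hy t).sub_const p
    have h2 : HasDerivAt (fun t : ℝ => Real.exp (α * t)) (Real.exp (α * t) * α) t := by
      have := (Real.hasDerivAt_exp (α * t)).comp t ((hasDerivAt_id t).const_mul α)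
      simpa [Function.comp_def] using this
    have := h1.mul h2
    refine this.congr_deriv ?_
    ring
  have hconst : g t = g 0 :=
    is_const_of_deriv_eq_zero (fun s => (hgd s).differentiableAt) (fun s => (hgd s).deriv) t 0
  have h0 : g 0 = y 0 - p := by simp [hg]
  have key : (y t - p) * Real.exp (α * t) = y 0 - p := by rw [← h0, ← hconst]
  have hne : Real.exp (α * t) ≠ 0 := Real.exp_ne_zero _
  have h2 : y t - p = (y 0 - p) * (Real.exp (α * t))⁻¹ := by
    rw [← key]; field_simp
  have h3 : Real.exp (-α * t) = (Real.exp (α * t))⁻¹ := by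
    rw [show (-α * t) = -(α * t) by ring, Real.exp_neg]
  rw [h3]; linarith

lemma limit_atBot {C α p : ℝ} (hα : α < 0) :
    Filter.Tendsto (fun t : ℝ => C * Real.exp (-α * t) + p) Filter.atBot (nhds p) := by
  have h1 : Filter.Tendsto (fun t : ℝ => -α * t) Filter.atBot Filter.atBot := by
    exact Filter.Tendsto.const_mul_atBot (by linarith) Filter.tendsto_id
  have h2 : Filter.Tendsto (fun t : ℝ => Real.exp (-α * t)) Filter.atBot (nhds 0) :=
    Real.tendsto_exp_atBot.comp h1
  have := (h2.const_mul C).add_const p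
  simpa using this

lemma center_eq {y : ℝ → ℝ} {α p : ℝ} (hα : 0 < α)
    (hy : ∀ t, HasDerivAt y (-(α * (y t - p))) t)
    (hlim : Filter.Tendsto y Filter.atBot (nhds p)) : y 0 = p := by
  by_contra hne
  have hrep := sol_repr hy
  have h1 : Filter.Tendsto (fun t => y t - p) Filter.atBot (nhds 0) := by
    simpa using hlim.sub_const p
  have h2 : Filter.Tendsto (fun t : ℝ => Real.exp (-α * t)) Filter.atBot (nhds 0) := by
    have : Filter.Tendsto (fun t => (y t - p) * (y 0 - p)⁻¹) Filter.atBot (nhds 0) := by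
      simpa using h1.mul_const (y 0 - p)⁻¹
    refine this.congr (fun t => ?_)
    rw [hrep t]
    field_simp [sub_ne_zero.mpr hne]
    ring
  have hev : ∀ᶠ t in (Filter.atBot : Filter ℝ), Real.exp (-α * t) < 1 := by
    have := h2 (Metric.ball_mem_nhds (0:ℝ) one_pos)
    filter_upwards [this] with t ht
    have := mem_ball_zero_iff.mp ht
    calc Real.exp (-α * t) ≤ |Real.exp (-α * t)| := le_abs_self _
    _ < 1 := this
  have hev2 : ∀ᶠ t in (Filter.atBot : Filter ℝ), t ≤ 0 := Filter.eventually_le_atBot 0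
  obtain ⟨t, ht1, ht2⟩ := (hev.and hev2).exists
  have : (1:ℝ) ≤ Real.exp (-α * t) := by
    rw [show (1:ℝ) = Real.exp 0 by simp]
    exact Real.exp_le_exp.mpr (by nlinarith)
  linarith



/-- `I = (I₁, I₂, I₃)` is a gradient tree on the tripod for `f₁, f₂, f₃` with critical
points `p₁, p₂, p₃`: each `Iᵢ` is a continuous negative gradient flow line of
`f_{i+1} - f_i` converging to `pᵢ` at `-∞`, and all three agree at the central point `0`. -/
def IsGradTripod (f₁ f₂ f₃ : ℝ → ℝ) (p₁ p₂ p₃ : ℝ)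
    (I : (ℝ → ℝ) × (ℝ → ℝ) × (ℝ → ℝ)) : Prop :=
  Continuous I.1 ∧ Continuous I.2.1 ∧ Continuous I.2.2 ∧
  (∀ t : ℝ, HasDerivAt I.1 (-(deriv (fun x => f₂ x - f₁ x) (I.1 t))) t) ∧
  (∀ t : ℝ, HasDerivAt I.2.1 (-(deriv (fun x => f₃ x - f₂ x) (I.2.1 t))) t) ∧
  (∀ t : ℝ, HasDerivAt I.2.2 (-(deriv (fun x => f₁ x - f₃ x) (I.2.2 t))) t) ∧
  Filter.Tendsto I.1 Filter.atBot (nhds p₁) ∧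
  Filter.Tendsto I.2.1 Filter.atBot (nhds p₂) ∧
  Filter.Tendsto I.2.2 Filter.atBot (nhds p₃) ∧
  I.1 0 = I.2.1 0 ∧ I.2.1 0 = I.2.2 0

/-- For quadratics `fᵢ(x) = (1/2)aᵢx² + bᵢx + cᵢ` with `a₂ < a₁ < a₃` and critical
points `pᵢ` of `f_{i+1} - f_i`, there is exactly one gradient tree on the tripod;
its common central value is `p₂`, and it is given by the explicit exponential formulas. -/
theorem stmt_2 (a₁ a₂ a₃ b₁ b₂ b₃ c₁ c₂ c₃ : ℝ) (h21 : a₂ < a₁) (h13 : a₁ < a₃)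
    (f₁ f₂ f₃ : ℝ → ℝ)
    (hf₁ : f₁ = fun x => (1/2) * a₁ * x ^ 2 + b₁ * x + c₁)
    (hf₂ : f₂ = fun x => (1/2) * a₂ * x ^ 2 + b₂ * x + c₂)
    (hf₃ : f₃ = fun x => (1/2) * a₃ * x ^ 2 + b₃ * x + c₃)
    (p₁ p₂ p₃ : ℝ)
    (hp₁ : p₁ = -(b₂ - b₁) / (a₂ - a₁))
    (hp₂ : p₂ = -(b₃ - b₂) / (a₃ - a₂))
    (hp₃ : p₃ = -(b₁ - b₃) / (a₁ - a₃)) :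
    (∃! I : (ℝ → ℝ) × (ℝ → ℝ) × (ℝ → ℝ), IsGradTripod f₁ f₂ f₃ p₁ p₂ p₃ I) ∧
    IsGradTripod f₁ f₂ f₃ p₁ p₂ p₃
      (fun t => (p₂ - p₁) * Real.exp (-(a₂ - a₁) * t) + p₁,
       fun _ => p₂,
       fun t => (p₂ - p₃) * Real.exp (-(a₁ - a₃) * t) + p₃) ∧
    (∀ I : (ℝ → ℝ) × (ℝ → ℝ) × (ℝ → ℝ), IsGradTripod f₁ f₂ f₃ p₁ p₂ p₃ I →
      I.1 0 = p₂) := by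
  subst hf₁ hf₂ hf₃
  have hα₁ : a₂ - a₁ < 0 := by linarith
  have hα₂ : 0 < a₃ - a₂ := by linarith
  have hα₃ : a₁ - a₃ < 0 := by linarith
  -- critical point identities
  have hne₁ : a₂ - a₁ ≠ 0 := ne_of_lt hα₁
  have hne₂ : a₃ - a₂ ≠ 0 := ne_of_gt hα₂
  have hne₃ : a₁ - a₃ ≠ 0 := ne_of_lt hα₃
  have hc₁ : ∀ x : ℝ, -((a₂ - a₁) * x + (b₂ - b₁)) = -((a₂ - a₁) * (x - p₁)) := by
    intro x; rw [hp₁]; field_simp; ring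
  have hc₂ : ∀ x : ℝ, -((a₃ - a₂) * x + (b₃ - b₂)) = -((a₃ - a₂) * (x - p₂)) := by
    intro x; rw [hp₂]; field_simp; ring
  have hc₃ : ∀ x : ℝ, -((a₁ - a₃) * x + (b₁ - b₃)) = -((a₁ - a₃) * (x - p₃)) := by
    intro x; rw [hp₃]; field_simp; ring
  -- the explicit triple is a gradient tree
  have hex : IsGradTripod
      (fun x => (1/2) * a₁ * x ^ 2 + b₁ * x + c₁)
      (fun x => (1/2) * a₂ * x ^ 2 + b₂ * x + c₂)
      (fun x => (1/2) * a₃ * x ^ 2 + b₃ * x + c₃) p₁ p₂ p₃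
      (fun t => (p₂ - p₁) * Real.exp (-(a₂ - a₁) * t) + p₁,
       fun _ => p₂,
       fun t => (p₂ - p₃) * Real.exp (-(a₁ - a₃) * t) + p₃) := by
    refine ⟨by continuity, continuous_const, by continuity, ?_, ?_, ?_, ?_, ?_, ?_, ?_, ?_⟩
    · intro t
      rw [deriv_quad a₂ b₂ c₂ a₁ b₁ c₁, hc₁]
      exact explicit_deriv (p₂ - p₁) (a₂ - a₁) p₁ t
    · intro t
      rw [deriv_quad a₃ b₃ c₃ a₂ b₂ c₂, hc₂]
      simpa using hasDerivAt_const t p₂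
    · intro t
      rw [deriv_quad a₁ b₁ c₁ a₃ b₃ c₃, hc₃]
      exact explicit_deriv (p₂ - p₃) (a₁ - a₃) p₃ t
    · exact limit_atBot hα₁
    · exact tendsto_const_nhds
    · exact limit_atBot hα₃
    · simp
    · simp
  -- uniqueness
  have huniq : ∀ I : (ℝ → ℝ) × (ℝ → ℝ) × (ℝ → ℝ),
      IsGradTripod
        (fun x => (1/2) * a₁ * x ^ 2 + b₁ * x + c₁)
        (fun x => (1/2) * a₂ * x ^ 2 + b₂ * x + c₂)
        (fun x => (1/2) * a₃ * x ^ 2 + b₃ * x + c₃) p₁ p₂ p₃ I →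
      I = (fun t => (p₂ - p₁) * Real.exp (-(a₂ - a₁) * t) + p₁,
       fun _ => p₂,
       fun t => (p₂ - p₃) * Real.exp (-(a₁ - a₃) * t) + p₃) := by
    rintro ⟨I₁, I₂, I₃⟩ ⟨-, -, -, hd₁, hd₂, hd₃, -, hl₂, -, he₁, he₂⟩
    simp only at hd₁ hd₂ hd₃ hl₂ he₁ he₂ ⊢
    have hy₁ : ∀ t, HasDerivAt I₁ (-((a₂ - a₁) * (I₁ t - p₁))) t := by
      intro t; have := hd₁ t; rwa [deriv_quad a₂ b₂ c₂ a₁ b₁ c₁, hc₁] at this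
    have hy₂ : ∀ t, HasDerivAt I₂ (-((a₃ - a₂) * (I₂ t - p₂))) t := by
      intro t; have := hd₂ t; rwa [deriv_quad a₃ b₃ c₃ a₂ b₂ c₂, hc₂] at this
    have hy₃ : ∀ t, HasDerivAt I₃ (-((a₁ - a₃) * (I₃ t - p₃))) t := by
      intro t; have := hd₃ t; rwa [deriv_quad a₁ b₁ c₁ a₃ b₃ c₃, hc₃] at this
    have h20 : I₂ 0 = p₂ := center_eq hα₂ hy₂ hl₂
    have h10 : I₁ 0 = p₂ := he₁.trans h20
    have h30' : I₃ 0 = p₂ := by rw [← he₂]; exact h20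
    refine Prod.ext ?_ (Prod.ext ?_ ?_) <;> simp only <;> funext t
    · rw [sol_repr hy₁ t, h10]
    · rw [sol_repr hy₂ t, h20]; ring_nf
    · rw [sol_repr hy₃ t, h30']
  refine ⟨⟨_, hex, huniq⟩, hex, ?_⟩
  intro I hI
  have := huniq I hI
  rw [this]
  simp [hp₂]
end

section
/- Let a, b be positive real numbers with a ≠ b. For ε > 0 define h_ε : (-∞, 0) → ℝ, h_ε(τ) = e^{aτ·g(ε)} - e^{bτ·ε}, where g(ε) > 0, g(ε)/ε → b/a as ε → 0⁺, and a·g(ε) < b·ε for all small ε. Then sup_{τ < 0} |h_ε(τ)| → 0 as ε → 0⁺. In particular, with πα₃^ε := arctan(a₃ε) - arctan(a₁ε) for a₁ < a₃, one has sup_{τ ∈ (-∞,0)} |e^{πα₃^ε τ} - e^{(a₃-a₁)ετ}| → 0 as ε → 0⁺. -/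
open Real Filter Set

lemma pointwise_bound {c d τ : ℝ} (hc : 0 < c) (hcd : c < d) (hτ : τ < 0) :
    |Real.exp (c * τ) - Real.exp (d * τ)| ≤ (d - c) / c := by
  have h1 : d * τ < c * τ := by nlinarith
  have h2 : Real.exp (d * τ) < Real.exp (c * τ) := Real.exp_lt_exp.2 h1
  rw [abs_of_nonneg (by linarith)]
  have h3 : 1 - Real.exp ((d - c) * τ) ≤ -((d - c) * τ) := by
    have := Real.add_one_le_exp ((d - c) * τ); linarith
  have h4 : Real.exp (c * τ) - Real.exp (d * τ)
      = Real.exp (c * τ) * (1 - Real.exp ((d - c) * τ)) := by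
    rw [show d * τ = c * τ + (d - c) * τ by ring, Real.exp_add]; ring
  have hpos : (0:ℝ) < Real.exp (c * τ) := Real.exp_pos _
  have h5 : Real.exp (c * τ) - Real.exp (d * τ) ≤ (d - c) * (Real.exp (c * τ) * (-τ)) := by
    rw [h4]
    have := mul_le_mul_of_nonneg_left h3 hpos.le
    nlinarith
  have hE : Real.exp (c * τ) * Real.exp (-(c * τ)) = 1 := by
    rw [← Real.exp_add]; simp
  have hxe : -(c * τ) ≤ Real.exp (-(c * τ)) := by
    linarith [Real.add_one_le_exp (-(c * τ))]
  have h7 : Real.exp (c * τ) * (-τ) ≤ 1 / c := by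
    rw [le_div_iff₀ hc]
    calc Real.exp (c * τ) * (-τ) * c = Real.exp (c * τ) * (-(c * τ)) := by ring
      _ ≤ Real.exp (c * τ) * Real.exp (-(c * τ)) :=
          mul_le_mul_of_nonneg_left hxe hpos.le
      _ = 1 := hE
  calc Real.exp (c * τ) - Real.exp (d * τ) ≤ (d - c) * (Real.exp (c * τ) * (-τ)) := h5
    _ ≤ (d - c) * (1 / c) := mul_le_mul_of_nonneg_left h7 (by linarith)
    _ = (d - c) / c := by ring

lemma key (a b : ℝ) (ha : 0 < a) (hb : 0 < b) (g : ℝ → ℝ)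
    (hg : ∀ ε : ℝ, 0 < ε → 0 < g ε)
    (hgl : Filter.Tendsto (fun ε => g ε / ε) (nhdsWithin 0 (Set.Ioi 0)) (nhds (b / a)))
    (hgs : ∀ᶠ ε in nhdsWithin 0 (Set.Ioi 0), a * g ε < b * ε) :
    Filter.Tendsto
      (fun ε => ⨆ τ : Set.Iio (0:ℝ),
        |Real.exp (a * (τ : ℝ) * g ε) - Real.exp (b * (τ : ℝ) * ε)|)
      (nhdsWithin 0 (Set.Ioi 0)) (nhds 0) := by
  have hne : Nonempty (Set.Iio (0:ℝ)) := ⟨⟨-1, by norm_num⟩⟩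
  have hmem : ∀ᶠ ε in nhdsWithin (0:ℝ) (Set.Ioi 0), 0 < ε :=
    eventually_nhdsWithin_of_forall (fun x hx => hx)
  -- the upper bound function
  set F : ℝ → ℝ := fun ε => (b * ε - a * g ε) / (a * g ε) with hF
  have hub : ∀ᶠ ε in nhdsWithin (0:ℝ) (Set.Ioi 0),
      (⨆ τ : Set.Iio (0:ℝ),
        |Real.exp (a * (τ : ℝ) * g ε) - Real.exp (b * (τ : ℝ) * ε)|) ≤ F ε := by
    filter_upwards [hgs, hmem] with ε hlt hε
    apply ciSup_le
    intro τ
    have hc : 0 < a * g ε := mul_pos ha (hg ε hε)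
    have := pointwise_bound (c := a * g ε) (d := b * ε) (τ := τ) hc hlt τ.2
    calc |Real.exp (a * (τ:ℝ) * g ε) - Real.exp (b * (τ:ℝ) * ε)|
        = |Real.exp ((a * g ε) * (τ:ℝ)) - Real.exp ((b * ε) * (τ:ℝ))| := by ring_nf
      _ ≤ (b * ε - a * g ε) / (a * g ε) := this
  have hlb : ∀ᶠ ε in nhdsWithin (0:ℝ) (Set.Ioi 0),
      0 ≤ ⨆ τ : Set.Iio (0:ℝ),
        |Real.exp (a * (τ : ℝ) * g ε) - Real.exp (b * (τ : ℝ) * ε)| := by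
    filter_upwards with ε
    exact Real.iSup_nonneg (fun τ => abs_nonneg _)
  -- F tends to 0
  have hFt : Filter.Tendsto F (nhdsWithin 0 (Set.Ioi 0)) (nhds 0) := by
    have hinv : Filter.Tendsto (fun ε => (g ε / ε)⁻¹) (nhdsWithin 0 (Set.Ioi 0))
        (nhds ((b / a)⁻¹)) := hgl.inv₀ (by positivity)
    have h2 : Filter.Tendsto (fun ε => (b / a) * (g ε / ε)⁻¹ - 1)
        (nhdsWithin 0 (Set.Ioi 0)) (nhds 0) := by
      have := (hinv.const_mul (b / a)).sub_const 1
      have heq : b / a * (b / a)⁻¹ - 1 = 0 := by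
        field_simp
        norm_num
      rwa [heq] at this
    apply h2.congr'
    filter_upwards [hmem] with ε hε
    have hgε := hg ε hε
    field_simp [hF]
    simp only [hF]
    field_simp
  exact squeeze_zero' hlb hub hFt

lemma arctan_sub_lt {x y : ℝ} (h : x < y) :
    Real.arctan y - Real.arctan x < y - x := by
  have key : ∀ ⦃s t : ℝ⦄, s < t → (s - Real.arctan s) < (t - Real.arctan t) := by
    have hderiv : ∀ u : ℝ, HasDerivAt (fun v : ℝ => v - Real.arctan v)
        (1 - 1 / (1 + u ^ 2)) u := fun u => (hasDerivAt_id u).sub (Real.hasDerivAt_arctan u)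
    have hcont : Continuous (fun v : ℝ => v - Real.arctan v) :=
      continuous_id.sub Real.continuous_arctan
    have hpos : ∀ u : ℝ, u ≠ 0 → 0 < 1 - 1 / (1 + u ^ 2) := by
      intro u hu
      have h1 : (0:ℝ) < 1 + u ^ 2 := by positivity
      have h2 : 1 / (1 + u ^ 2) < 1 := by
        rw [div_lt_one h1]; nlinarith [sq_pos_of_ne_zero hu]
      linarith
    have hI : StrictMonoOn (fun v : ℝ => v - Real.arctan v) (Set.Ici 0) := by
      apply strictMonoOn_of_deriv_pos (convex_Ici 0) (hcont.continuousOn)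
      intro u hu
      rw [interior_Ici] at hu
      rw [(hderiv u).deriv]
      exact hpos u (ne_of_gt hu)
    have hJ : StrictMonoOn (fun v : ℝ => v - Real.arctan v) (Set.Iic 0) := by
      apply strictMonoOn_of_deriv_pos (convex_Iic 0) (hcont.continuousOn)
      intro u hu
      rw [interior_Iic] at hu
      rw [(hderiv u).deriv]
      exact hpos u (ne_of_lt hu)
    intro s t hst
    rcases le_or_gt 0 s with hs | hs
    · exact hI (Set.mem_Ici.2 hs) (Set.mem_Ici.2 (hs.trans hst.le)) hst
    · rcases le_or_gt t 0 with ht | ht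
      · exact hJ (Set.mem_Iic.2 hs.le) (Set.mem_Iic.2 ht) hst
      · calc s - Real.arctan s < 0 - Real.arctan 0 :=
              hJ (Set.mem_Iic.2 hs.le) (Set.mem_Iic.2 le_rfl) hs
          _ < t - Real.arctan t := hI (Set.mem_Ici.2 le_rfl) (Set.mem_Ici.2 ht.le) ht
  have := key h
  linarith

/-- Let `0 < a`, `0 < b`, `a ≠ b`, and `g(ε) > 0` with `g(ε)/ε → b/a` and
`a·g(ε) < b·ε` for small `ε > 0`. Then `sup_{τ<0} |e^{aτg(ε)} - e^{bτε}| → 0`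
as `ε → 0⁺`; in particular for `a₁ < a₃`,
`sup_{τ<0} |e^{(arctan(a₃ε)-arctan(a₁ε))τ} - e^{(a₃-a₁)ετ}| → 0`. -/
theorem stmt_7 (a b : ℝ) (ha : 0 < a) (hb : 0 < b) (hab : a ≠ b) (g : ℝ → ℝ)
    (hg : ∀ ε : ℝ, 0 < ε → 0 < g ε)
    (hgl : Filter.Tendsto (fun ε => g ε / ε) (nhdsWithin 0 (Set.Ioi 0)) (nhds (b / a)))
    (hgs : ∀ᶠ ε in nhdsWithin 0 (Set.Ioi 0), a * g ε < b * ε) :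
    Filter.Tendsto
      (fun ε => ⨆ τ : Set.Iio (0:ℝ),
        |Real.exp (a * (τ : ℝ) * g ε) - Real.exp (b * (τ : ℝ) * ε)|)
      (nhdsWithin 0 (Set.Ioi 0)) (nhds 0) ∧
    ∀ a₁ a₃ : ℝ, a₁ < a₃ →
      Filter.Tendsto
        (fun ε => ⨆ τ : Set.Iio (0:ℝ),
          |Real.exp ((Real.arctan (a₃ * ε) - Real.arctan (a₁ * ε)) * (τ : ℝ)) -
            Real.exp ((a₃ - a₁) * ε * (τ : ℝ))|)
        (nhdsWithin 0 (Set.Ioi 0)) (nhds 0) := by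
  constructor
  · exact key a b ha hb g hg hgl hgs
  · intro a₁ a₃ h13
    set G : ℝ → ℝ := fun ε => Real.arctan (a₃ * ε) - Real.arctan (a₁ * ε) with hG
    have hGpos : ∀ ε : ℝ, 0 < ε → 0 < G ε := by
      intro ε hε
      have : a₁ * ε < a₃ * ε := by nlinarith
      simpa [hG, sub_pos] using Real.arctan_strictMono this
    have hGlt : ∀ᶠ ε in nhdsWithin (0:ℝ) (Set.Ioi 0), 1 * G ε < (a₃ - a₁) * ε := by
      apply eventually_nhdsWithin_of_forall
      intro ε hε
      have hε : (0:ℝ) < ε := hε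
      have hlt : a₁ * ε < a₃ * ε := by nlinarith
      have := arctan_sub_lt hlt
      simp only [hG, one_mul]
      nlinarith
    have hGl : Filter.Tendsto (fun ε => G ε / ε) (nhdsWithin 0 (Set.Ioi 0))
        (nhds ((a₃ - a₁) / 1)) := by
      have hd3 : HasDerivAt (fun ε : ℝ => Real.arctan (a₃ * ε)) a₃ 0 := by
        have := (Real.hasDerivAt_arctan (a₃ * 0)).comp 0
          ((hasDerivAt_id (0:ℝ)).const_mul a₃)
        simpa [Function.comp_def] using this
      have hd1 : HasDerivAt (fun ε : ℝ => Real.arctan (a₁ * ε)) a₁ 0 := by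
        have := (Real.hasDerivAt_arctan (a₁ * 0)).comp 0
          ((hasDerivAt_id (0:ℝ)).const_mul a₁)
        simpa [Function.comp_def] using this
      have hd : HasDerivAt G (a₃ - a₁) 0 := hd3.sub hd1
      have hs := hasDerivAt_iff_tendsto_slope.1 hd
      have hmono : nhdsWithin (0:ℝ) (Set.Ioi 0) ≤ nhdsWithin 0 {(0:ℝ)}ᶜ :=
        nhdsWithin_mono 0 (fun x hx => ne_of_gt hx)
      have := hs.mono_left hmono
      rw [show (a₃ - a₁) / 1 = a₃ - a₁ by ring]
      apply this.congr'
      apply eventually_nhdsWithin_of_forall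
      intro ε hε
      have hε : (0:ℝ) < ε := hε
      simp [slope, hG, div_eq_inv_mul]
    have := key 1 (a₃ - a₁) one_pos (by linarith) G hGpos hGl hGlt
    apply this.congr
    intro ε
    congr 1
    funext τ
    congr 2 <;> ring_nf <;> simp only [hG] <;> ring_nf
end

section
/- Let L_i = {(x,y) : y = a_i x + b_i}, i = 1,2,3,4, be four lines in ℝ² with a_i ≠ a_{i+1} (indices mod 4), and suppose a₁, a₃ ∈ (a₂, a₄) (i.e. a₂ < a₁ < a₄ and a₂ < a₃ < a₄). Let p_i = -(b_{i+1} - b_i)/(a_{i+1} - a_i) be the x-coordinate of the intersection of L_i and L_{i+1}, and let x_i = (p_i, q_i) be these intersection points. If the x_i are vertices of a convex quadrilateral listed in counterclockwise order, then p₁ < p₂ < p₃ < p₄ or p₄ < p₃ < p₂ < p₁. -/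
/-- Four lines `y = aᵢx + bᵢ` with `a₁, a₃ ∈ (a₂, a₄)`, intersection points
`xᵢ = (pᵢ, qᵢ)` of `Lᵢ` and `Lᵢ₊₁`: if the `xᵢ` are vertices of a convex quadrilateral
in counterclockwise order (all corner cross products positive), then
`p₁ < p₂ < p₃ < p₄` or `p₄ < p₃ < p₂ < p₁`. -/
theorem stmt_8 (a₁ a₂ a₃ a₄ b₁ b₂ b₃ b₄ p₁ p₂ p₃ p₄ : ℝ)
    (h21 : a₂ < a₁) (h14 : a₁ < a₄) (h23 : a₂ < a₃) (h34 : a₃ < a₄)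
    (hp₁ : p₁ = -(b₂ - b₁) / (a₂ - a₁))
    (hp₂ : p₂ = -(b₃ - b₂) / (a₃ - a₂))
    (hp₃ : p₃ = -(b₄ - b₃) / (a₄ - a₃))
    (hp₄ : p₄ = -(b₁ - b₄) / (a₁ - a₄))
    (x₁ x₂ x₃ x₄ : ℝ × ℝ)
    (hx₁ : x₁ = (p₁, a₁ * p₁ + b₁)) (hx₂ : x₂ = (p₂, a₂ * p₂ + b₂))
    (hx₃ : x₃ = (p₃, a₃ * p₃ + b₃)) (hx₄ : x₄ = (p₄, a₄ * p₄ + b₄))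
    (hc₁ : 0 < (x₂.1 - x₁.1) * (x₃.2 - x₂.2) - (x₂.2 - x₁.2) * (x₃.1 - x₂.1))
    (hc₂ : 0 < (x₃.1 - x₂.1) * (x₄.2 - x₃.2) - (x₃.2 - x₂.2) * (x₄.1 - x₃.1))
    (hc₃ : 0 < (x₄.1 - x₃.1) * (x₁.2 - x₄.2) - (x₄.2 - x₃.2) * (x₁.1 - x₄.1))
    (hc₄ : 0 < (x₁.1 - x₄.1) * (x₂.2 - x₁.2) - (x₁.2 - x₄.2) * (x₂.1 - x₁.1)) :
    (p₁ < p₂ ∧ p₂ < p₃ ∧ p₃ < p₄) ∨ (p₄ < p₃ ∧ p₃ < p₂ ∧ p₂ < p₁) := by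
  subst hx₁ hx₂ hx₃ hx₄
  simp only [Prod.fst, Prod.snd] at hc₁ hc₂ hc₃ hc₄
  have n1 : a₂ - a₁ ≠ 0 := by intro h; nlinarith
  have n2 : a₃ - a₂ ≠ 0 := by intro h; nlinarith
  have n3 : a₄ - a₃ ≠ 0 := by intro h; nlinarith
  have n4 : a₁ - a₄ ≠ 0 := by intro h; nlinarith
  have e1 : (a₂ - a₁) * p₁ + (b₂ - b₁) = 0 := by
    rw [hp₁]; field_simp; ring
  have e2 : (a₃ - a₂) * p₂ + (b₃ - b₂) = 0 := by
    rw [hp₂]; field_simp; ring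
  have e3 : (a₄ - a₃) * p₃ + (b₄ - b₃) = 0 := by
    rw [hp₃]; field_simp; ring
  have e4 : (a₁ - a₄) * p₄ + (b₁ - b₄) = 0 := by
    rw [hp₄]; field_simp; ring
  have k1 : (p₂ - p₁) * ((a₃ * p₃ + b₃) - (a₂ * p₂ + b₂)) -
      ((a₂ * p₂ + b₂) - (a₁ * p₁ + b₁)) * (p₃ - p₂) =
      (a₃ - a₂) * ((p₂ - p₁) * (p₃ - p₂)) := by
    linear_combination (p₂ - p₁) * e2 - (p₃ - p₂) * e1
  have k2 : (p₃ - p₂) * ((a₄ * p₄ + b₄) - (a₃ * p₃ + b₃)) -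
      ((a₃ * p₃ + b₃) - (a₂ * p₂ + b₂)) * (p₄ - p₃) =
      (a₄ - a₃) * ((p₃ - p₂) * (p₄ - p₃)) := by
    linear_combination (p₃ - p₂) * e3 - (p₄ - p₃) * e2
  have k3 : (p₄ - p₃) * ((a₁ * p₁ + b₁) - (a₄ * p₄ + b₄)) -
      ((a₄ * p₄ + b₄) - (a₃ * p₃ + b₃)) * (p₁ - p₄) =
      (a₁ - a₄) * ((p₄ - p₃) * (p₁ - p₄)) := by
    linear_combination (p₄ - p₃) * e4 - (p₁ - p₄) * e3
  rw [k1] at hc₁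
  rw [k2] at hc₂
  rw [k3] at hc₃
  have h1 : 0 < (p₂ - p₁) * (p₃ - p₂) := by
    rcases mul_pos_iff.mp hc₁ with ⟨_, h⟩ | ⟨h, _⟩
    · exact h
    · linarith
  have h2 : 0 < (p₃ - p₂) * (p₄ - p₃) := by
    rcases mul_pos_iff.mp hc₂ with ⟨_, h⟩ | ⟨h, _⟩
    · exact h
    · linarith
  have h3 : (p₄ - p₃) * (p₁ - p₄) < 0 := by
    rcases mul_pos_iff.mp hc₃ with ⟨h, _⟩ | ⟨_, h⟩
    · linarith
    · exact h
  clear hc₁ hc₂ hc₃ hc₄ e1 e2 e3 e4 k1 k2 k3 hp₁ hp₂ hp₃ hp₄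
  rcases lt_trichotomy p₁ p₂ with h | h | h
  · left
    have h23' : p₂ < p₃ := by nlinarith
    have h34' : p₃ < p₄ := by nlinarith
    exact ⟨h, h23', h34'⟩
  · exfalso; rw [← h] at h1; nlinarith
  · right
    have h23' : p₃ < p₂ := by nlinarith
    have h34' : p₄ < p₃ := by nlinarith
    exact ⟨h34', h23', h⟩
end

section
/- Let f_i(x) = (1/2)a_i x² + b_i x + c_i for i = 1,2,3,4 with a₂ < a₁ < a₄, a₂ < a₃ < a₄, a₁ ≠ a₃, and suppose the critical points p_i of f_{i+1} - f_i (indices mod 4) satisfy p₁ < p₂ < p₃ < p₄. Let p₁₃ = -(b₃-b₁)/(a₃-a₁) be the critical point of f₃ - f₁. Then (p₁₃ - p₃)/(p₁₃ - p₂) ∈ (0,1) when a₃ > a₁ [resp. ∈ (1,∞) when a₃ < a₁], so l := -(1/(a₃-a₁))·log((p₁₃-p₃)/(p₁₃-p₂)) is a well-defined positive real number. -/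
private lemma posmul_aux {c x : ℝ} (hc : 0 < c) (h : 0 < c * x) : 0 < x := by nlinarith

private lemma negmul_aux {c x : ℝ} (hc : c < 0) (h : 0 < c * x) : x < 0 := by nlinarith

/-- With `a₂ < a₁ < a₄`, `a₂ < a₃ < a₄`, `a₁ ≠ a₃` and `p₁ < p₂ < p₃ < p₄`, the ratio
`(p₁₃-p₃)/(p₁₃-p₂)` is positive, is `< 1` if `a₁ < a₃` and `> 1` if `a₃ < a₁`, so that
there is a unique `l > 0` with `e^{-(a₃-a₁)l} = (p₁₃-p₃)/(p₁₃-p₂)`. -/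
theorem stmt_9 (a₁ a₂ a₃ a₄ b₁ b₂ b₃ b₄ p₁ p₂ p₃ p₄ p₁₃ : ℝ)
    (h21 : a₂ < a₁) (h14 : a₁ < a₄) (h23 : a₂ < a₃) (h34 : a₃ < a₄) (h13 : a₁ ≠ a₃)
    (hp₁ : p₁ = -(b₂ - b₁) / (a₂ - a₁))
    (hp₂ : p₂ = -(b₃ - b₂) / (a₃ - a₂))
    (hp₃ : p₃ = -(b₄ - b₃) / (a₄ - a₃))
    (hp₄ : p₄ = -(b₁ - b₄) / (a₁ - a₄))
    (hp₁₃ : p₁₃ = -(b₃ - b₁) / (a₃ - a₁))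
    (hord₁ : p₁ < p₂) (hord₂ : p₂ < p₃) (hord₃ : p₃ < p₄) :
    0 < (p₁₃ - p₃) / (p₁₃ - p₂) ∧
    (a₁ < a₃ → (p₁₃ - p₃) / (p₁₃ - p₂) < 1) ∧
    (a₃ < a₁ → 1 < (p₁₃ - p₃) / (p₁₃ - p₂)) ∧
    (∃! l : ℝ, 0 < l ∧ Real.exp (-(a₃ - a₁) * l) = (p₁₃ - p₃) / (p₁₃ - p₂)) := by
  have hc : a₃ - a₁ ≠ 0 := sub_ne_zero.mpr (Ne.symm h13)
  have n21 : a₂ - a₁ ≠ 0 := sub_ne_zero.mpr (ne_of_lt h21)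
  have n32 : a₃ - a₂ ≠ 0 := sub_ne_zero.mpr (ne_of_gt h23)
  have n43 : a₄ - a₃ ≠ 0 := sub_ne_zero.mpr (ne_of_gt h34)
  have n14 : a₁ - a₄ ≠ 0 := sub_ne_zero.mpr (ne_of_lt h14)
  have e1 : (a₂ - a₁) * p₁ = -(b₂ - b₁) := by
    rw [hp₁, mul_comm, div_mul_cancel₀ _ n21]
  have e2 : (a₃ - a₂) * p₂ = -(b₃ - b₂) := by
    rw [hp₂, mul_comm, div_mul_cancel₀ _ n32]
  have e3 : (a₄ - a₃) * p₃ = -(b₄ - b₃) := by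
    rw [hp₃, mul_comm, div_mul_cancel₀ _ n43]
  have e4 : (a₁ - a₄) * p₄ = -(b₁ - b₄) := by
    rw [hp₄, mul_comm, div_mul_cancel₀ _ n14]
  have e13 : (a₃ - a₁) * p₁₃ = -(b₃ - b₁) := by
    rw [hp₁₃, mul_comm, div_mul_cancel₀ _ hc]
  clear hp₁ hp₂ hp₃ hp₄ hp₁₃
  have key1 : (a₃ - a₁) * (p₁₃ - p₂) = (a₂ - a₁) * (p₁ - p₂) := by nlinarith
  have key2 : (a₃ - a₁) * (p₁₃ - p₃) = (a₄ - a₁) * (p₄ - p₃) := by nlinarith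
  have hpos1 : 0 < (a₃ - a₁) * (p₁₃ - p₂) := by
    rw [key1]; exact mul_pos_of_neg_of_neg (by linarith) (by linarith)
  have hpos2 : 0 < (a₃ - a₁) * (p₁₃ - p₃) := by
    rw [key2]; exact mul_pos (by linarith) (by linarith)
  have main : 0 < (p₁₃ - p₃) / (p₁₃ - p₂) ∧
      (a₁ < a₃ → (p₁₃ - p₃) / (p₁₃ - p₂) < 1) ∧
      (a₃ < a₁ → 1 < (p₁₃ - p₃) / (p₁₃ - p₂)) := by
    rcases lt_or_gt_of_ne h13 with h | h
    · have h2 : 0 < p₁₃ - p₂ := posmul_aux (by linarith) hpos1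
      have h3 : 0 < p₁₃ - p₃ := posmul_aux (by linarith) hpos2
      refine ⟨div_pos h3 h2, fun _ => ?_, fun hh => absurd hh (by linarith)⟩
      rw [div_lt_one h2]; linarith
    · have h2 : p₁₃ - p₂ < 0 := negmul_aux (by linarith) hpos1
      have h3 : p₁₃ - p₃ < 0 := negmul_aux (by linarith) hpos2
      refine ⟨div_pos_of_neg_of_neg h3 h2, fun hh => absurd hh (by linarith), fun _ => ?_⟩
      rw [one_lt_div_of_neg h2]; linarith
    
  obtain ⟨hr0, hlt, hgt⟩ := main
  have hne : -(a₃ - a₁) ≠ 0 := neg_ne_zero.mpr hc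
  refine ⟨hr0, hlt, hgt, ⟨Real.log ((p₁₃ - p₃) / (p₁₃ - p₂)) / (-(a₃ - a₁)), ⟨?_, ?_⟩, ?_⟩⟩
  · rcases lt_or_gt_of_ne h13 with h | h
    · exact div_pos_of_neg_of_neg (Real.log_neg hr0 (hlt h)) (by linarith)
    · exact div_pos (Real.log_pos (hgt h)) (by linarith)
  · rw [mul_div_cancel₀ _ hne, Real.exp_log hr0]
  · rintro y ⟨hy0, hye⟩
    have hlog : -(a₃ - a₁) * y = Real.log ((p₁₃ - p₃) / (p₁₃ - p₂)) := by
      rw [← hye, Real.log_exp]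
    rw [eq_div_iff hne]
    linarith [hlog]
end

section
/- Let α₁^ε, α₂^ε, α₃^ε, α₄^ε ∈ (0,1) with α₁^ε+α₂^ε+α₃^ε+α₄^ε = 2 be the normalized interior angles of a convex quadrilateral, and let z ∈ (0,1) be the fourth Schwarz-Christoffel prevertex. Then the ratio of side lengths satisfies |x₁-x₂|/|x₃-x₄| = [Γ(α₁)Γ(α₂)/Γ(α₁+α₂)] · [Γ(α₃+α₄)/(Γ(α₃)Γ(α₄))] · z^{1-α₃-α₄} · ₂F₁(α₂, 1-α₄, α₁+α₂; z) / ₂F₁(α₃, 1-α₁, α₃+α₄; z), where x₁ = w(1), x₂ = w(∞), x₃ = w(0), x₄ = w(z) are the images of the prevertices 1, ∞, 0, z under the Schwarz-Christoffel map w(ζ') = A + B∫^{ζ'} ζ^{α₃-1}(ζ-z)^{α₄-1}(ζ-1)^{α₁-1} dζ. -/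
/-- The Pochhammer symbol `(a)ₙ` in `ℝ`. -/
noncomputable def rpoch (a : ℝ) (n : ℕ) : ℝ := ∏ i ∈ Finset.range n, (a + i)

/-- The real Gauss hypergeometric series `₂F₁(a,b,c;x)`. -/
noncomputable def twoF1R (a b c x : ℝ) : ℝ :=
  ∑' n : ℕ, rpoch a n * rpoch b n / (rpoch c n * (n.factorial : ℝ)) * x ^ n

section SCAux
open MeasureTheory Set Real

lemma rpoch_zero (a : ℝ) : rpoch a 0 = 1 := by simp [rpoch]

lemma rpoch_succ (a : ℝ) (n : ℕ) : rpoch a (n+1) = rpoch a n * (a + n) := by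
  simp [rpoch, Finset.prod_range_succ]

lemma rpoch_pos {a : ℝ} (ha : 0 < a) (n : ℕ) : 0 < rpoch a n := by
  apply Finset.prod_pos; intro i _; positivity

lemma rpoch_le_rpoch {a b : ℝ} (ha : 0 < a) (hab : a ≤ b) (n : ℕ) :
    rpoch a n ≤ rpoch b n := by
  apply Finset.prod_le_prod
  · intro i _; positivity
  · intro i _; linarith

lemma rpoch_le_factorial {a : ℝ} (ha : 0 < a) (ha1 : a ≤ 1) (n : ℕ) :
    rpoch a n ≤ (n.factorial : ℝ) := by
  induction n with
  | zero => simp [rpoch_zero]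
  | succ n ih =>
      rw [rpoch_succ]
      push_cast [Nat.factorial_succ]
      have h1 : a + n ≤ n + 1 := by linarith
      have h2 : (0:ℝ) < a + n := by positivity
      calc rpoch a n * (a + n) ≤ (n.factorial : ℝ) * (n + 1) := by
            apply mul_le_mul ih h1 h2.le (by positivity)
        _ = (n + 1) * (n.factorial : ℝ) := by ring

lemma Gamma_rpoch {a : ℝ} (ha : 0 < a) (n : ℕ) :
    Real.Gamma (a + n) = Real.Gamma a * rpoch a n := by
  induction n with
  | zero => simp [rpoch_zero]
  | succ n ih =>
      have : a + (n+1 : ℕ) = (a + n) + 1 := by push_cast; ring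
      rw [this, Real.Gamma_add_one (by positivity), ih, rpoch_succ]
      ring

lemma cpow_real_sub_one {x : ℝ} (hx : 0 ≤ x) (y : ℝ) :
    (x:ℂ) ^ ((y:ℂ) - 1) = ((x ^ (y - 1) : ℝ) : ℂ) := by
  have h : ((y:ℂ) - 1) = ((y - 1 : ℝ) : ℂ) := by push_cast; ring
  rw [h, ← Complex.ofReal_cpow hx]

/-- The real Beta integral over `Ioo 0 1`. -/
lemma betaR_eq {p q : ℝ} (hp : 0 < p) (hq : 0 < q) :
    ∫ s in Ioo (0:ℝ) 1, s ^ (p-1) * (1-s) ^ (q-1) =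
      Real.Gamma p * Real.Gamma q / Real.Gamma (p+q) := by
  have key : Complex.betaIntegral p q =
      ((∫ s in Ioo (0:ℝ) 1, s ^ (p-1) * (1-s) ^ (q-1) : ℝ) : ℂ) := by
    rw [Complex.betaIntegral, intervalIntegral.integral_of_le zero_le_one,
      MeasureTheory.integral_Ioc_eq_integral_Ioo]
    rw [show ((∫ (s : ℝ) in Ioo (0:ℝ) 1, s ^ (p - 1) * (1-s) ^ (q - 1) : ℝ) : ℂ)
      = ∫ (s : ℝ) in Ioo (0:ℝ) 1, ((s ^ (p - 1) * (1-s) ^ (q - 1) : ℝ) : ℂ) from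
      (integral_ofReal (𝕜 := ℂ)).symm]
    apply setIntegral_congr_fun measurableSet_Ioo
    intro s hs
    have h1 : (0:ℝ) ≤ s := hs.1.le
    have h2 : (0:ℝ) ≤ 1 - s := by linarith [hs.2]
    dsimp only
    rw [show (1 - (s:ℂ)) = ((1-s : ℝ):ℂ) by push_cast; ring,
      cpow_real_sub_one h1, cpow_real_sub_one h2]
    push_cast
    ring
  have h2 := Complex.Gamma_mul_Gamma_eq_betaIntegral
    (s := (p:ℂ)) (t := (q:ℂ)) (by simpa using hp) (by simpa using hq)
  rw [key] at h2
  rw [← Complex.ofReal_add, Complex.Gamma_ofReal, Complex.Gamma_ofReal,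
    Complex.Gamma_ofReal] at h2
  have h3 : Real.Gamma p * Real.Gamma q = Real.Gamma (p+q) *
      ∫ s in Ioo (0:ℝ) 1, s ^ (p-1) * (1-s) ^ (q-1) := by
    exact_mod_cast h2
  have h4 : Real.Gamma (p+q) ≠ 0 := (Real.Gamma_pos_of_pos (by positivity)).ne'
  field_simp [h4] at h3 ⊢
  linarith [h3]

lemma integrableOn_betaR {p q : ℝ} (hp : 0 < p) (hq : 0 < q) :
    IntegrableOn (fun s : ℝ => s ^ (p-1) * (1-s) ^ (q-1)) (Ioo (0:ℝ) 1) := by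
  have h := (Complex.betaIntegral_convergent (u := (p:ℂ)) (v := (q:ℂ))
    (by simpa using hp) (by simpa using hq)).1
  have h' : IntegrableOn (fun s : ℝ => (s:ℂ) ^ ((p:ℂ)-1) * (1-(s:ℂ)) ^ ((q:ℂ)-1))
      (Ioo (0:ℝ) 1) := h.mono_set Ioo_subset_Ioc_self
  have h2 : IntegrableOn (fun s : ℝ =>
      RCLike.re ((s:ℂ) ^ ((p:ℂ)-1) * (1-(s:ℂ)) ^ ((q:ℂ)-1))) (Ioo (0:ℝ) 1) := h'.re
  apply h2.congr_fun _ measurableSet_Ioo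
  intro s hs
  have h1 : (0:ℝ) ≤ s := hs.1.le
  have h2' : (0:ℝ) ≤ 1 - s := by linarith [hs.2]
  have : (s:ℂ) ^ ((p:ℂ)-1) * (1-(s:ℂ)) ^ ((q:ℂ)-1) =
      ((s ^ (p-1) * (1-s) ^ (q-1) : ℝ) : ℂ) := by
    rw [show (1 - (s:ℂ)) = ((1-s : ℝ):ℂ) by push_cast; ring,
      cpow_real_sub_one h1, cpow_real_sub_one h2']
    push_cast; ring
  simp [this]

lemma summable_rpoch {a x : ℝ} (ha : 0 < a) (ha1 : a ≤ 1) (hx : 0 ≤ x) (hx1 : x < 1) :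
    Summable (fun n : ℕ => rpoch a n / n.factorial * x ^ n) := by
  apply Summable.of_nonneg_of_le (fun n => by have := (rpoch_pos ha n).le; positivity)
    (fun n => ?_) (summable_geometric_of_lt_one hx hx1)
  calc rpoch a n / n.factorial * x ^ n ≤ 1 * x ^ n := by
        apply mul_le_mul_of_nonneg_right _ (pow_nonneg hx n)
        rw [div_le_one (by positivity)]
        exact rpoch_le_factorial ha ha1 n
    _ = x ^ n := one_mul _

lemma hasSum_binomial {a x : ℝ} (ha : 0 < a) (ha1 : a ≤ 1) (hx : 0 ≤ x) (hx1 : x < 1) :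
    HasSum (fun n : ℕ => rpoch a n / n.factorial * x ^ n) ((1 - x) ^ (-a)) := by
  set F : ℕ → ℝ → ℝ := fun n t => x ^ n / n.factorial * (Real.exp (-t) * t ^ (a + n - 1))
    with hF
  have hFint : ∀ n : ℕ, Integrable (F n) (volume.restrict (Ioi (0:ℝ))) := by
    intro n
    exact (Real.GammaIntegral_convergent (by positivity : (0:ℝ) < a + n)).const_mul _
  have hFval : ∀ n : ℕ, ∫ t in Ioi (0:ℝ), F n t = x ^ n / n.factorial * Real.Gamma (a + n) := by
    intro n
    rw [hF]
    dsimp only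
    rw [MeasureTheory.integral_const_mul, ← Real.Gamma_eq_integral (by positivity : (0:ℝ) < a + n)]
  have hnorm : ∀ n : ℕ, ∫ t in Ioi (0:ℝ), ‖F n t‖ = x ^ n / n.factorial * Real.Gamma (a + n) := by
    intro n
    rw [← hFval n]
    apply setIntegral_congr_fun measurableSet_Ioi
    intro t ht
    have ht' : (0:ℝ) < t := ht
    dsimp only [hF]
    rw [Real.norm_of_nonneg (by positivity)]
  have hnorm2 : ∀ n : ℕ, x ^ n / n.factorial * Real.Gamma (a + n)
      = Real.Gamma a * (rpoch a n / n.factorial * x ^ n) := by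
    intro n; rw [Gamma_rpoch ha]; ring
  have hsum2 : Summable (fun n : ℕ => ∫ t in Ioi (0:ℝ), ‖F n t‖) := by
    apply Summable.congr (((summable_rpoch ha ha1 hx hx1).mul_left (Real.Gamma a)))
    intro n
    rw [hnorm n, hnorm2 n]
  have key := MeasureTheory.integral_tsum_of_summable_integral_norm hFint hsum2
  have hL : ∑' n : ℕ, ∫ t in Ioi (0:ℝ), F n t
      = Real.Gamma a * ∑' n : ℕ, rpoch a n / n.factorial * x ^ n := by
    rw [← tsum_mul_left]
    exact tsum_congr fun n => by rw [hFval n, hnorm2 n]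
  have hR : ∫ t in Ioi (0:ℝ), (∑' n : ℕ, F n t)
      = (1 / (1-x)) ^ a * Real.Gamma a := by
    rw [← integral_rpow_mul_exp_neg_mul_Ioi ha (by linarith : (0:ℝ) < 1 - x)]
    apply setIntegral_congr_fun measurableSet_Ioi
    intro t ht
    have ht' : (0:ℝ) < t := ht
    have h1 : ∀ n : ℕ, F n t = (Real.exp (-t) * t ^ (a-1)) * ((x*t) ^ n / n.factorial) := by
      intro n
      have h2 : t ^ (a + (n:ℕ) - 1) = t ^ (a - 1) * t ^ (n:ℕ) := by
        rw [← Real.rpow_natCast t n, ← Real.rpow_add ht']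
        ring_nf
      rw [show F n t = x ^ n / n.factorial * (Real.exp (-t) * t ^ (a + (n:ℕ) - 1)) from rfl,
        h2, mul_pow]
      ring
    show (∑' n : ℕ, F n t) = t ^ (a-1) * Real.exp (-((1-x)*t))
    rw [tsum_congr h1, tsum_mul_left]
    have hexp : ∑' n : ℕ, ((x*t) ^ n / n.factorial) = Real.exp (x*t) := by
      rw [Real.exp_eq_exp_ℝ, NormedSpace.exp_eq_tsum_div]
    rw [hexp, show -((1-x)*t) = -t + (x*t) by ring, Real.exp_add]
    ring
  rw [hL, hR] at key
  have hGa : Real.Gamma a ≠ 0 := (Real.Gamma_pos_of_pos ha).ne'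
  have htsum : ∑' n : ℕ, rpoch a n / n.factorial * x ^ n = (1-x) ^ (-a) := by
    have h3 : (1 / (1-x)) ^ a = (1-x) ^ (-a) := by
      rw [one_div, Real.inv_rpow (by linarith : (0:ℝ) ≤ 1 - x),
        ← Real.rpow_neg (by linarith : (0:ℝ) ≤ 1 - x)]
    rw [h3] at key
    exact mul_left_cancel₀ hGa (by rw [key]; ring)
  exact (summable_rpoch ha ha1 hx hx1).hasSum_iff.mpr htsum

variable {a b c' z : ℝ}

lemma F1term_nonneg (ha : 0 < a) (hb : 0 < b) (hc : 0 < c') (hz : 0 ≤ z) (n : ℕ) :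
    0 ≤ rpoch a n * rpoch b n / (rpoch (b+c') n * (n.factorial : ℝ)) * z ^ n := by
  have h1 := (rpoch_pos ha n).le
  have h2 := (rpoch_pos hb n).le
  have h3 := rpoch_pos (by linarith : (0:ℝ) < b + c') n
  positivity

lemma F1term_le (ha : 0 < a) (ha1 : a ≤ 1) (hb : 0 < b) (hc : 0 < c') (hz : 0 ≤ z) (n : ℕ) :
    rpoch a n * rpoch b n / (rpoch (b+c') n * (n.factorial : ℝ)) * z ^ n ≤ z ^ n := by
  have h3 := rpoch_pos (by linarith : (0:ℝ) < b + c') n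
  have hfac : (0:ℝ) < (n.factorial : ℝ) := by positivity
  have h4 : rpoch a n * rpoch b n ≤ (n.factorial : ℝ) * rpoch (b+c') n := by
    apply mul_le_mul (rpoch_le_factorial ha ha1 n)
      (rpoch_le_rpoch hb (by linarith) n) (rpoch_pos hb n).le hfac.le
  calc rpoch a n * rpoch b n / (rpoch (b+c') n * (n.factorial : ℝ)) * z ^ n
      ≤ 1 * z ^ n := by
        apply mul_le_mul_of_nonneg_right _ (pow_nonneg hz n)
        rw [div_le_one (by positivity)]
        linarith [h4]
    _ = z ^ n := one_mul _

lemma twoF1R_summable (ha : 0 < a) (ha1 : a ≤ 1) (hb : 0 < b) (hc : 0 < c')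
    (hz : 0 ≤ z) (hz1 : z < 1) :
    Summable (fun n : ℕ => rpoch a n * rpoch b n / (rpoch (b+c') n * (n.factorial : ℝ)) * z ^ n) :=
  Summable.of_nonneg_of_le (F1term_nonneg ha hb hc hz) (F1term_le ha ha1 hb hc hz)
    (summable_geometric_of_lt_one hz hz1)

lemma twoF1R_pos (ha : 0 < a) (ha1 : a ≤ 1) (hb : 0 < b) (hc : 0 < c')
    (hz : 0 ≤ z) (hz1 : z < 1) : 0 < twoF1R a b (b+c') z := by
  apply Summable.tsum_pos (twoF1R_summable ha ha1 hb hc hz hz1) (F1term_nonneg ha hb hc hz) 0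
  simp [rpoch_zero]

lemma euler_int (ha : 0 < a) (ha1 : a ≤ 1) (hb : 0 < b) (hc : 0 < c')
    (hz : 0 < z) (hz1 : z < 1) :
    ∫ s in Ioo (0:ℝ) 1, s ^ (b-1) * (1-s) ^ (c'-1) * (1 - z*s) ^ (-a)
      = (Real.Gamma b * Real.Gamma c' / Real.Gamma (b+c')) * twoF1R a b (b+c') z := by
  set B0 : ℝ := Real.Gamma b * Real.Gamma c' / Real.Gamma (b+c') with hB0
  set D : ℕ → ℝ := fun n => rpoch a n * rpoch b n / (rpoch (b+c') n * (n.factorial : ℝ)) * z ^ n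
    with hD
  set F : ℕ → ℝ → ℝ := fun n s =>
    rpoch a n / n.factorial * z ^ n * (s ^ ((n:ℝ) + b - 1) * (1-s) ^ (c'-1)) with hF
  have hbc : (0:ℝ) < b + c' := by linarith
  have hGbc : Real.Gamma (b+c') ≠ 0 := (Real.Gamma_pos_of_pos hbc).ne'
  have hFint : ∀ n : ℕ, Integrable (F n) (volume.restrict (Ioo (0:ℝ) 1)) := by
    intro n
    exact (integrableOn_betaR (p := (n:ℝ) + b) (by positivity) hc).const_mul _
  have hFval : ∀ n : ℕ, ∫ s in Ioo (0:ℝ) 1, F n s = B0 * D n := by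
    intro n
    rw [hF]
    dsimp only
    rw [MeasureTheory.integral_const_mul, betaR_eq (by positivity : (0:ℝ) < (n:ℝ) + b) hc]
    rw [show (n:ℝ) + b = b + (n:ℝ) by ring, Gamma_rpoch hb n,
      show b + (n:ℝ) + c' = (b + c') + (n:ℝ) by ring, Gamma_rpoch hbc n]
    rw [hB0, hD]
    have h1 := (rpoch_pos hbc n).ne'
    have h2 : ((n.factorial : ℝ)) ≠ 0 := by positivity
    field_simp
  have hnorm : ∀ n : ℕ, ∫ s in Ioo (0:ℝ) 1, ‖F n s‖ = B0 * D n := by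
    intro n
    rw [← hFval n]
    apply setIntegral_congr_fun measurableSet_Ioo
    intro s hs
    have h1 : (0:ℝ) ≤ s := hs.1.le
    have h2 : (0:ℝ) ≤ 1 - s := by linarith [hs.2]
    have h3 := (rpoch_pos ha n).le
    dsimp only [hF]
    rw [Real.norm_of_nonneg (by positivity)]
  have hB0pos : 0 < B0 := by
    rw [hB0]
    have := Real.Gamma_pos_of_pos hb
    have := Real.Gamma_pos_of_pos hc
    have := Real.Gamma_pos_of_pos hbc
    positivity
  have hsum2 : Summable (fun n : ℕ => ∫ s in Ioo (0:ℝ) 1, ‖F n s‖) := by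
    apply Summable.of_nonneg_of_le
      (fun n => by rw [hnorm n]; exact mul_nonneg hB0pos.le (F1term_nonneg ha hb hc hz.le n))
      (fun n => ?_) ((summable_geometric_of_lt_one hz.le hz1).mul_left B0)
    rw [hnorm n]
    exact mul_le_mul_of_nonneg_left (F1term_le ha ha1 hb hc hz.le n) hB0pos.le
  have key := MeasureTheory.integral_tsum_of_summable_integral_norm hFint hsum2
  have hL : ∑' n : ℕ, ∫ s in Ioo (0:ℝ) 1, F n s = B0 * twoF1R a b (b+c') z := by
    rw [twoF1R, ← tsum_mul_left]
    exact tsum_congr fun n => hFval n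
  have hR : ∫ s in Ioo (0:ℝ) 1, (∑' n : ℕ, F n s)
      = ∫ s in Ioo (0:ℝ) 1, s ^ (b-1) * (1-s) ^ (c'-1) * (1 - z*s) ^ (-a) := by
    apply setIntegral_congr_fun measurableSet_Ioo
    intro s hs
    have hs0 : (0:ℝ) < s := hs.1
    have hs1 : s < 1 := hs.2
    have hzs0 : (0:ℝ) ≤ z * s := by positivity
    have hzs1 : z * s < 1 := by nlinarith
    have h1 : ∀ n : ℕ, F n s
        = (s ^ (b-1) * (1-s) ^ (c'-1)) * (rpoch a n / n.factorial * (z*s) ^ n) := by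
      intro n
      have h2 : s ^ ((n:ℝ) + b - 1) = s ^ (b - 1) * s ^ (n:ℕ) := by
        rw [← Real.rpow_natCast s n, ← Real.rpow_add hs0]
        ring_nf
      rw [show F n s = rpoch a n / n.factorial * z ^ n * (s ^ ((n:ℝ) + b - 1) * (1-s) ^ (c'-1))
        from rfl, h2, mul_pow]
      ring
    show (∑' n : ℕ, F n s) = s ^ (b-1) * (1-s) ^ (c'-1) * (1 - z*s) ^ (-a)
    rw [tsum_congr h1, tsum_mul_left, (hasSum_binomial ha ha1 hzs0 hzs1).tsum_eq]
  rw [hL, hR] at key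
  exact key.symm

lemma twoF1R_comm (a b c x : ℝ) : twoF1R a b c x = twoF1R b a c x := by
  unfold twoF1R
  exact tsum_congr fun n => by ring


end SCAux

open MeasureTheory Set Real in
/-- Side-length ratio of a Schwarz-Christoffel quadrilateral with prevertices
`1, ∞, 0, z` and angles `παᵢ` (`Σαᵢ = 2`): with `x₂-x₁` and `x₄-x₃` given by the
Schwarz-Christoffel integrals (times `B`), one has
`|x₁-x₂|/|x₃-x₄| = [Γ(α₁)Γ(α₂)/Γ(α₁+α₂)]·[Γ(α₃+α₄)/(Γ(α₃)Γ(α₄))]·z^{1-α₃-α₄}·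
₂F₁(α₂,1-α₄,α₁+α₂;z)/₂F₁(α₃,1-α₁,α₃+α₄;z)`. -/
theorem stmt_14 (α₁ α₂ α₃ α₄ : ℝ)
    (hα₁ : α₁ ∈ Set.Ioo (0:ℝ) 1) (hα₂ : α₂ ∈ Set.Ioo (0:ℝ) 1)
    (hα₃ : α₃ ∈ Set.Ioo (0:ℝ) 1) (hα₄ : α₄ ∈ Set.Ioo (0:ℝ) 1)
    (hsum : α₁ + α₂ + α₃ + α₄ = 2)
    (z : ℝ) (hz : z ∈ Set.Ioo (0:ℝ) 1)
    (A B : ℂ) (hB : B ≠ 0) (x₁ x₂ x₃ x₄ : ℂ)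
    (hside₁ : x₂ - x₁ = B * ∫ t in Set.Ioi (1:ℝ),
      (t : ℂ) ^ ((α₃ : ℂ) - 1) * ((t : ℂ) - (z : ℂ)) ^ ((α₄ : ℂ) - 1) *
        ((t : ℂ) - 1) ^ ((α₁ : ℂ) - 1))
    (hside₂ : x₄ - x₃ = B * ∫ t in (0:ℝ)..z,
      (t : ℂ) ^ ((α₃ : ℂ) - 1) * ((t : ℂ) - (z : ℂ)) ^ ((α₄ : ℂ) - 1) *
        ((t : ℂ) - 1) ^ ((α₁ : ℂ) - 1)) :
    ‖x₁ - x₂‖ / ‖x₃ - x₄‖ =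
      (Real.Gamma α₁ * Real.Gamma α₂ / Real.Gamma (α₁ + α₂)) *
        (Real.Gamma (α₃ + α₄) / (Real.Gamma α₃ * Real.Gamma α₄)) *
        z ^ (1 - α₃ - α₄) *
        twoF1R α₂ (1 - α₄) (α₁ + α₂) z / twoF1R α₃ (1 - α₁) (α₃ + α₄) z := by
  obtain ⟨hz0, hz1⟩ := hz
  obtain ⟨h10, h11⟩ := hα₁
  obtain ⟨h20, h21⟩ := hα₂
  obtain ⟨h30, h31⟩ := hα₃
  obtain ⟨h40, h41⟩ := hα₄
  set g₁ : ℝ → ℝ := fun t => t ^ (α₃-1) * (t-z) ^ (α₄-1) * (t-1) ^ (α₁-1) with hg₁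
  set g₂ : ℝ → ℝ := fun t => t ^ (α₃-1) * (z-t) ^ (α₄-1) * (1-t) ^ (α₁-1) with hg₂
  -- Step A1 : complex integral over Ioi 1 is real
  have A1 : (∫ t in Set.Ioi (1:ℝ),
      (t : ℂ) ^ ((α₃ : ℂ) - 1) * ((t : ℂ) - (z : ℂ)) ^ ((α₄ : ℂ) - 1) *
        ((t : ℂ) - 1) ^ ((α₁ : ℂ) - 1))
      = ((∫ t in Set.Ioi (1:ℝ), g₁ t : ℝ) : ℂ) := by
    rw [show ((∫ t in Set.Ioi (1:ℝ), g₁ t : ℝ) : ℂ)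
      = ∫ t in Set.Ioi (1:ℝ), ((g₁ t : ℝ) : ℂ) from (integral_ofReal (𝕜 := ℂ)).symm]
    apply setIntegral_congr_fun measurableSet_Ioi
    intro t ht
    have ht1 : (1:ℝ) < t := ht
    have e1 : ((t:ℂ) - (z:ℂ)) = (((t - z : ℝ)) : ℂ) := by push_cast; ring
    have e2 : ((t:ℂ) - 1) = (((t - 1 : ℝ)) : ℂ) := by push_cast; ring
    dsimp only
    rw [e1, e2, cpow_real_sub_one (by linarith : (0:ℝ) ≤ t) α₃,
      cpow_real_sub_one (by linarith : (0:ℝ) ≤ t - z) α₄,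
      cpow_real_sub_one (by linarith : (0:ℝ) ≤ t - 1) α₁, hg₁]
    push_cast
    ring
  -- Step A2 : substitution t = 1/s
  have A2 : (∫ t in Set.Ioi (1:ℝ), g₁ t)
      = ∫ s in Ioo (0:ℝ) 1, s ^ (α₂-1) * (1-s) ^ (α₁-1) * (1 - z*s) ^ (-(1-α₄)) := by
    have himg : (fun s : ℝ => s⁻¹) '' Ioo (0:ℝ) 1 = Set.Ioi (1:ℝ) := by
      ext y
      simp only [mem_image, mem_Ioo, mem_Ioi]
      constructor
      · rintro ⟨s, ⟨hs0, hs1⟩, rfl⟩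
        exact one_lt_inv_iff₀.mpr ⟨hs0, hs1⟩
      · intro hy
        refine ⟨y⁻¹, ⟨by positivity, inv_lt_one_iff₀.mpr (Or.inr hy)⟩, inv_inv y⟩
    have hderiv : ∀ s ∈ Ioo (0:ℝ) 1, HasDerivWithinAt (fun s : ℝ => s⁻¹)
        (-(s^2)⁻¹) (Ioo (0:ℝ) 1) s := by
      intro s hs
      exact (hasDerivAt_inv hs.1.ne').hasDerivWithinAt
    have hinj : InjOn (fun s : ℝ => s⁻¹) (Ioo (0:ℝ) 1) := inv_injective.injOn
    rw [← himg, integral_image_eq_integral_abs_deriv_smul measurableSet_Ioo hderiv hinj g₁]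
    apply setIntegral_congr_fun measurableSet_Ioo
    intro s hs
    obtain ⟨hs0, hs1⟩ := hs
    have hzs1 : z * s < 1 := by nlinarith
    have h1s : (0:ℝ) ≤ 1 - s := by linarith
    have h1zs : (0:ℝ) ≤ 1 - z*s := by linarith
    have hsinv : (0:ℝ) ≤ s⁻¹ := by positivity
    have hinv_rpow : ∀ y : ℝ, (s⁻¹) ^ y = s ^ (-y) := fun y => by
      rw [Real.inv_rpow hs0.le, ← Real.rpow_neg hs0.le]
    have e1 : s⁻¹ - z = s⁻¹ * (1 - z*s) := by field_simp
    have e2 : s⁻¹ - 1 = s⁻¹ * (1 - s) := by field_simp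
    have habs : |(-(s^2)⁻¹)| = s ^ (-2:ℝ) := by
      rw [abs_neg, abs_of_pos (by positivity)]
      rw [show (-2:ℝ) = -((2:ℕ):ℝ) by norm_num, Real.rpow_neg hs0.le, Real.rpow_natCast]
    have hcomb : s ^ (-2:ℝ) * (s ^ (-(α₃-1)) * (s ^ (-(α₄-1)) * s ^ (-(α₁-1))))
        = s ^ (α₂-1) := by
      rw [← Real.rpow_add hs0, ← Real.rpow_add hs0, ← Real.rpow_add hs0]
      congr 1
      linarith
    dsimp only
    rw [smul_eq_mul, habs, hg₁]
    dsimp only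
    rw [e1, e2, Real.mul_rpow hsinv h1zs, Real.mul_rpow hsinv h1s,
      hinv_rpow, hinv_rpow, hinv_rpow,
      show (-(1-α₄)) = α₄ - 1 by ring, ← hcomb]
    ring
  -- value of the first integral
  have hI₁ : (∫ t in Set.Ioi (1:ℝ), g₁ t)
      = (Real.Gamma α₂ * Real.Gamma α₁ / Real.Gamma (α₂+α₁)) *
        twoF1R (1-α₄) α₂ (α₂+α₁) z := by
    rw [A2]
    exact euler_int (by linarith) (by linarith) h20 h10 hz0 hz1
  -- Step B1 : complex interval integral 0..z
  set C : ℂ := Complex.exp (Real.pi * Complex.I * ((α₄:ℂ)-1)) *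
      Complex.exp (Real.pi * Complex.I * ((α₁:ℂ)-1)) with hC
  have B1 : (∫ t in (0:ℝ)..z,
      (t : ℂ) ^ ((α₃ : ℂ) - 1) * ((t : ℂ) - (z : ℂ)) ^ ((α₄ : ℂ) - 1) *
        ((t : ℂ) - 1) ^ ((α₁ : ℂ) - 1))
      = ((∫ t in Ioo (0:ℝ) z, g₂ t : ℝ) : ℂ) * C := by
    rw [intervalIntegral.integral_of_le hz0.le, MeasureTheory.integral_Ioc_eq_integral_Ioo]
    have hmr : (∫ t in Ioo (0:ℝ) z, ((g₂ t : ℝ) : ℂ) * C)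
        = ((∫ t in Ioo (0:ℝ) z, g₂ t : ℝ) : ℂ) * C := by
      rw [MeasureTheory.integral_mul_const]
      congr 1
      exact integral_ofReal (𝕜 := ℂ)
    rw [← hmr]
    apply setIntegral_congr_fun measurableSet_Ioo
    intro t ht
    obtain ⟨ht0, htz⟩ := ht
    have e1 : ((t:ℂ) - (z:ℂ)) = (((t - z : ℝ)) : ℂ) := by push_cast; ring
    have e2 : ((t:ℂ) - 1) = (((t - 1 : ℝ)) : ℂ) := by push_cast; ring
    dsimp only
    rw [e1, e2,
      Complex.ofReal_cpow_of_nonpos (by linarith : (t - z : ℝ) ≤ 0),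
      Complex.ofReal_cpow_of_nonpos (by linarith : (t - 1 : ℝ) ≤ 0)]
    rw [show (-((t - z : ℝ)) : ℂ) = (((z - t : ℝ)) : ℂ) by push_cast; ring,
      show (-((t - 1 : ℝ)) : ℂ) = (((1 - t : ℝ)) : ℂ) by push_cast; ring]
    rw [cpow_real_sub_one (by linarith : (0:ℝ) ≤ t) α₃,
      cpow_real_sub_one (by linarith : (0:ℝ) ≤ z - t) α₄,
      cpow_real_sub_one (by linarith : (0:ℝ) ≤ 1 - t) α₁, hg₂, hC]
    push_cast
    ring
  have habsC : ‖C‖ = 1 := by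
    rw [hC, norm_mul, Complex.norm_exp, Complex.norm_exp]
    have e3 : ∀ y : ℝ, ((Real.pi : ℂ) * Complex.I * ((y:ℂ)-1)).re = 0 := by
      intro y
      simp [Complex.mul_re, Complex.mul_im]
    rw [e3, e3, Real.exp_zero, one_mul]
  -- Step B2 : substitution t = z*s
  have B2 : (∫ t in Ioo (0:ℝ) z, g₂ t)
      = z ^ (α₃+α₄-1) *
        ∫ s in Ioo (0:ℝ) 1, s ^ (α₃-1) * (1-s) ^ (α₄-1) * (1 - z*s) ^ (-(1-α₁)) := by
    have himg : (fun s : ℝ => z * s) '' Ioo (0:ℝ) 1 = Ioo (0:ℝ) z := by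
      rw [show (fun s : ℝ => z * s) = (z * ·) from rfl, image_mul_left_Ioo hz0]
      norm_num
    have hderiv : ∀ s ∈ Ioo (0:ℝ) 1, HasDerivWithinAt (fun s : ℝ => z * s)
        z (Ioo (0:ℝ) 1) s := by
      intro s hs
      simpa using ((hasDerivAt_id s).const_mul z).hasDerivWithinAt
    have hinj : InjOn (fun s : ℝ => z * s) (Ioo (0:ℝ) 1) := fun u _ v _ h => by
      exact mul_left_cancel₀ hz0.ne' h
    rw [← himg, integral_image_eq_integral_abs_deriv_smul measurableSet_Ioo hderiv hinj g₂,
      ← MeasureTheory.integral_const_mul]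
    apply setIntegral_congr_fun measurableSet_Ioo
    intro s hs
    obtain ⟨hs0, hs1⟩ := hs
    have hzs1 : z * s < 1 := by nlinarith
    have h1s : (0:ℝ) ≤ 1 - s := by linarith
    have h1zs : (0:ℝ) ≤ 1 - z*s := by linarith
    have e1 : z - z * s = z * (1 - s) := by ring
    have hcomb : |z| * (z ^ (α₃-1) * z ^ (α₄-1)) = z ^ (α₃+α₄-1) := by
      calc |z| * (z ^ (α₃-1) * z ^ (α₄-1))
          = z ^ (1:ℝ) * z ^ (α₃-1+(α₄-1)) := by
            rw [abs_of_pos hz0, Real.rpow_one, ← Real.rpow_add hz0]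
        _ = z ^ (1+(α₃-1+(α₄-1))) := (Real.rpow_add hz0 _ _).symm
        _ = z ^ (α₃+α₄-1) := by ring_nf
    dsimp only
    rw [smul_eq_mul, hg₂]
    dsimp only
    rw [e1, Real.mul_rpow hz0.le hs0.le, Real.mul_rpow hz0.le h1s, ← hcomb,
      show (-(1-α₁)) = α₁ - 1 by ring]
    ring
  -- value of the second integral
  have hI₂ : (∫ t in Ioo (0:ℝ) z, g₂ t)
      = z ^ (α₃+α₄-1) * ((Real.Gamma α₃ * Real.Gamma α₄ / Real.Gamma (α₃+α₄)) *
        twoF1R (1-α₁) α₃ (α₃+α₄) z) := by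
    rw [B2, euler_int (by linarith) (by linarith) h30 h40 hz0 hz1]
  -- positivity facts
  have hG1 := Real.Gamma_pos_of_pos h10
  have hG2 := Real.Gamma_pos_of_pos h20
  have hG3 := Real.Gamma_pos_of_pos h30
  have hG4 := Real.Gamma_pos_of_pos h40
  have hG12 := Real.Gamma_pos_of_pos (by linarith : (0:ℝ) < α₁ + α₂)
  have hG34 := Real.Gamma_pos_of_pos (by linarith : (0:ℝ) < α₃ + α₄)
  have hF₁ : 0 < twoF1R (1-α₄) α₂ (α₂+α₁) z :=
    twoF1R_pos (by linarith) (by linarith) h20 h10 hz0.le hz1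
  have hF₂ : 0 < twoF1R (1-α₁) α₃ (α₃+α₄) z :=
    twoF1R_pos (by linarith) (by linarith) h30 h40 hz0.le hz1
  have hzp : (0:ℝ) < z ^ (α₃+α₄-1) := Real.rpow_pos_of_pos hz0 _
  have hI₁pos : 0 < (∫ t in Set.Ioi (1:ℝ), g₁ t) := by
    rw [hI₁]
    have : 0 < Real.Gamma α₂ * Real.Gamma α₁ / Real.Gamma (α₂+α₁) := by
      rw [show α₂ + α₁ = α₁ + α₂ by ring]
      positivity
    positivity
  have hI₂pos : 0 < (∫ t in Ioo (0:ℝ) z, g₂ t) := by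
    rw [hI₂]
    positivity
  -- final computation
  have hx12 : ‖x₁ - x₂‖ = ‖B‖ * (∫ t in Set.Ioi (1:ℝ), g₁ t) := by
    rw [show x₁ - x₂ = -(x₂ - x₁) by ring, norm_neg, hside₁, A1, norm_mul,
      Complex.norm_real, Real.norm_eq_abs, abs_of_pos hI₁pos]
  have hx34 : ‖x₃ - x₄‖ = ‖B‖ * (∫ t in Ioo (0:ℝ) z, g₂ t) := by
    rw [show x₃ - x₄ = -(x₄ - x₃) by ring, norm_neg, hside₂, B1, norm_mul, norm_mul,
      habsC, Complex.norm_real, Real.norm_eq_abs, abs_of_pos hI₂pos, mul_one]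
  rw [hx12, hx34, hI₁, hI₂]
  have hBabs : (0:ℝ) < ‖B‖ := by
    simpa using hB
  rw [twoF1R_comm (1-α₄) α₂, twoF1R_comm (1-α₁) α₃, show α₂ + α₁ = α₁ + α₂ by ring]
  have hzp_eq : z ^ (α₃+α₄-1) = (z ^ (1-α₃-α₄))⁻¹ := by
    rw [show α₃+α₄-1 = -(1-α₃-α₄) by ring, Real.rpow_neg hz0.le]
  rw [mul_div_mul_left _ _ hBabs.ne', hzp_eq]
  have hwpos : (0:ℝ) < z ^ (1-α₃-α₄) := Real.rpow_pos_of_pos hz0 _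
  have hF₂' : twoF1R α₃ (1-α₁) (α₃+α₄) z ≠ 0 := by
    rw [← twoF1R_comm]; exact hF₂.ne'
  field_simp
end

section
/- Appell's F₁ Euler integral: for complex a, b₁, b₂, c with 0 < Re a < Re c, and for x, y ∈ ℂ with |x| < 1 and |y| < 1, F₁(a, b₁, b₂, c; x, y) = [Γ(c)/(Γ(a)Γ(c-a))] ∫₀¹ t^{a-1}(1-t)^{c-a-1}(1-xt)^{-b₁}(1-yt)^{-b₂} dt, where all powers take principal values on the contour. -/
/-- The Pochhammer symbol `(a)ₙ` in `ℂ`. -/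
noncomputable def cpoch (a : ℂ) (n : ℕ) : ℂ := ∏ i ∈ Finset.range n, (a + i)

/-- Appell's first hypergeometric series `F₁(a,b₁,b₂,c;x,y)`. -/
noncomputable def appellF1 (a b₁ b₂ c x y : ℂ) : ℂ :=
  ∑' p : ℕ × ℕ, cpoch a (p.1 + p.2) * cpoch b₁ p.1 * cpoch b₂ p.2 /
    (cpoch c (p.1 + p.2) * (p.1.factorial : ℂ) * (p.2.factorial : ℂ)) *
    x ^ p.1 * y ^ p.2

section AuxAppell
open Complex Filter MeasureTheory Set Topology

lemma cpoch_succ (b : ℂ) (n : ℕ) : cpoch b (n + 1) = cpoch b n * (b + n) :=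
  Finset.prod_range_succ _ _

lemma cpoch_ne_zero {s : ℂ} (hs : 0 < s.re) (n : ℕ) : cpoch s n ≠ 0 := by
  refine Finset.prod_ne_zero_iff.2 fun i _ h => ?_
  have h2 : (s + (i : ℂ)).re = 0 := by rw [h]; simp
  simp only [Complex.add_re, Complex.natCast_re] at h2
  have : (0:ℝ) ≤ (i:ℝ) := Nat.cast_nonneg i
  linarith

lemma Gamma_add_nat {s : ℂ} (hs : 0 < s.re) (k : ℕ) :
    Complex.Gamma (s + k) = cpoch s k * Complex.Gamma s := by
  induction k with
  | zero => simp [cpoch]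
  | succ n ih =>
    have hsn : s + (n : ℂ) ≠ 0 := by
      intro h
      have h2 : (s + (n : ℂ)).re = 0 := by rw [h]; simp
      simp only [Complex.add_re, Complex.natCast_re] at h2
      have : (0:ℝ) ≤ (n:ℝ) := Nat.cast_nonneg n
      linarith
    have h1 : s + ((n + 1 : ℕ) : ℂ) = (s + n) + 1 := by push_cast; ring
    rw [h1, Complex.Gamma_add_one _ hsn, ih, cpoch_succ]
    ring

lemma summable_aux (b : ℂ) {r : ℝ} (h0 : 0 ≤ r) (hr : r < 1) :
    Summable (fun n : ℕ => ((n:ℝ) + 1) * ‖cpoch b n‖ / n.factorial * r ^ n) := by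
  set f : ℕ → ℝ := fun n => ((n:ℝ) + 1) * ‖cpoch b n‖ / n.factorial * r ^ n with hf
  have hnn : ∀ n, 0 ≤ f n := fun n => by positivity
  have hr' : r < (1 + r) / 2 := by linarith
  have h1 : (1 + r) / 2 < 1 := by linarith
  refine summable_of_ratio_norm_eventually_le h1 ?_
  have t0 : Tendsto (fun n : ℕ => 1 / ((n:ℝ) + 1)) atTop (𝓝 0) :=
    tendsto_one_div_add_atTop_nhds_zero_nat
  have t1 : Tendsto (fun n : ℕ => ((n:ℝ) + 2) / (n + 1)) atTop (𝓝 1) := by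
    have he : (fun n : ℕ => ((n:ℝ) + 2) / (n + 1)) = fun n : ℕ => 1 + 1 / ((n:ℝ) + 1) := by
      funext n
      have hne : ((n:ℝ) + 1) ≠ 0 := by positivity
      field_simp
      ring
    rw [he]
    simpa using tendsto_const_nhds.add t0
  have t2 : Tendsto (fun n : ℕ => ((n:ℝ) + ‖b‖) / (n + 1)) atTop (𝓝 1) := by
    have he : (fun n : ℕ => ((n:ℝ) + ‖b‖) / (n + 1))
        = fun n : ℕ => 1 + (‖b‖ - 1) * (1 / ((n:ℝ) + 1)) := by
      funext n
      have hne : ((n:ℝ) + 1) ≠ 0 := by positivity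
      field_simp
      ring
    rw [he]
    have h5 : Tendsto (fun n : ℕ => 1 + (‖b‖ - 1) * (1 / ((n:ℝ) + 1))) atTop
        (𝓝 (1 + (‖b‖ - 1) * 0)) :=
      (tendsto_const_nhds (x := (1:ℝ))).add (t0.const_mul (‖b‖ - 1))
    simpa using h5
  have ht : Tendsto (fun n : ℕ => ((n:ℝ) + 2) / (n + 1) * (((n:ℝ) + ‖b‖) / (n + 1)) * r)
      atTop (𝓝 r) := by
    have := (t1.mul t2).mul_const r
    simpa using this
  filter_upwards [ht.eventually (gt_mem_nhds hr')] with n hn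
  rw [Real.norm_of_nonneg (hnn _), Real.norm_of_nonneg (hnn _)]
  have hb : ‖cpoch b (n+1)‖ ≤ ‖cpoch b n‖ * ((n:ℝ) + ‖b‖) := by
    rw [cpoch_succ, norm_mul]
    gcongr
    calc ‖b + (n:ℂ)‖ ≤ ‖b‖ + ‖(n:ℂ)‖ := norm_add_le _ _
      _ = (n:ℝ) + ‖b‖ := by rw [Complex.norm_natCast]; ring
  have hfe : f (n+1) = ((n:ℝ) + 2) * ‖cpoch b (n+1)‖ / (((n:ℝ)+1) * n.factorial) * (r ^ n * r) := by
    simp only [hf, Nat.factorial_succ]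
    push_cast
    ring
  calc f (n+1) = ((n:ℝ) + 2) * ‖cpoch b (n+1)‖ / (((n:ℝ)+1) * n.factorial) * (r ^ n * r) := hfe
    _ ≤ ((n:ℝ) + 2) * (‖cpoch b n‖ * ((n:ℝ) + ‖b‖)) / (((n:ℝ)+1) * n.factorial) * (r ^ n * r) := by
        gcongr
    _ = (((n:ℝ) + 2) / (n + 1) * (((n:ℝ) + ‖b‖) / (n + 1)) * r) * f n := by
        have hne : ((n:ℝ) + 1) ≠ 0 := by positivity
        have hne2 : (n.factorial : ℝ) ≠ 0 := by positivity
        simp only [hf]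
        field_simp
    _ ≤ ((1 + r) / 2) * f n := by
        have h3 := le_of_lt hn
        have h4 := hnn n
        exact mul_le_mul_of_nonneg_right h3 h4

lemma summable_norm_term (b : ℂ) {z : ℂ} (hz : ‖z‖ < 1) :
    Summable (fun n : ℕ => ‖cpoch b n / n.factorial * z ^ n‖) := by
  refine (summable_aux b (norm_nonneg z) hz).of_nonneg_of_le (fun n => norm_nonneg _) fun n => ?_
  rw [norm_mul, norm_div, norm_pow, Complex.norm_natCast]
  have A0 : 0 ≤ ‖cpoch b n‖ / n.factorial * ‖z‖ ^ n := by positivity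
  calc ‖cpoch b n‖ / n.factorial * ‖z‖ ^ n
      = 1 * (‖cpoch b n‖ / n.factorial * ‖z‖ ^ n) := by ring
    _ ≤ ((n:ℝ) + 1) * (‖cpoch b n‖ / n.factorial * ‖z‖ ^ n) := by
        apply mul_le_mul_of_nonneg_right _ A0
        have : (0:ℝ) ≤ (n:ℝ) := Nat.cast_nonneg n
        linarith
    _ = ((n:ℝ) + 1) * ‖cpoch b n‖ / n.factorial * ‖z‖ ^ n := by ring

lemma summable_norm_term' (b : ℂ) {z : ℂ} (hz : ‖z‖ < 1) :
    Summable (fun n : ℕ => ‖cpoch b (n + 1) / n.factorial * z ^ n‖) := by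
  refine ((summable_aux b (norm_nonneg z) hz).mul_left (‖b‖ + 1)).of_nonneg_of_le
    (fun n => norm_nonneg _) fun n => ?_
  rw [norm_mul, norm_div, norm_pow, Complex.norm_natCast, cpoch_succ, norm_mul]
  have A0 : 0 ≤ ‖cpoch b n‖ / n.factorial * ‖z‖ ^ n := by positivity
  have hbn : ‖b + (n:ℂ)‖ ≤ (‖b‖ + 1) * ((n:ℝ) + 1) := by
    calc ‖b + (n:ℂ)‖ ≤ ‖b‖ + ‖(n:ℂ)‖ := norm_add_le _ _
      _ = ‖b‖ + (n:ℝ) := by rw [Complex.norm_natCast]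
      _ ≤ (‖b‖ + 1) * ((n:ℝ) + 1) := by nlinarith [norm_nonneg b, (Nat.cast_nonneg n : (0:ℝ) ≤ n)]
  calc ‖cpoch b n‖ * ‖b + (n:ℂ)‖ / n.factorial * ‖z‖ ^ n
      = ‖b + (n:ℂ)‖ * (‖cpoch b n‖ / n.factorial * ‖z‖ ^ n) := by ring
    _ ≤ ((‖b‖ + 1) * ((n:ℝ) + 1)) * (‖cpoch b n‖ / n.factorial * ‖z‖ ^ n) :=
        mul_le_mul_of_nonneg_right hbn A0
    _ = (‖b‖ + 1) * (((n:ℝ) + 1) * ‖cpoch b n‖ / n.factorial * ‖z‖ ^ n) := by ring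

lemma summable_deriv_bound (b : ℂ) {r : ℝ} (h0 : 0 < r) (hr : r < 1) :
    Summable (fun n : ℕ => ‖cpoch b n / (n.factorial : ℂ)‖ * ((n:ℝ) * r ^ (n - 1))) := by
  refine ((summable_aux b h0.le hr).mul_left (1 / r)).of_nonneg_of_le
    (fun n => by positivity) fun n => ?_
  rw [norm_div, Complex.norm_natCast]
  match n with
  | 0 =>
    have hz : ((0:ℕ):ℝ) * r ^ (0 - 1) = 0 := by norm_num
    rw [hz, mul_zero]
    positivity
  | (m + 1) =>
    have : (m + 1 : ℕ) - 1 = m := rfl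
    rw [this]
    have hne : r ≠ 0 := ne_of_gt h0
    have : (1 / r) * (((m+1:ℕ):ℝ) + 1) * ‖cpoch b (m+1)‖ / (m+1).factorial * r ^ (m+1)
        = (((m+1:ℕ):ℝ) + 1) * ‖cpoch b (m+1)‖ / (m+1).factorial * r ^ m := by
      rw [pow_succ]
      field_simp
    calc ‖cpoch b (m+1)‖ / ((m+1).factorial : ℝ) * (((m+1:ℕ):ℝ) * r ^ m)
        = ((m+1:ℕ):ℝ) * ‖cpoch b (m+1)‖ / (m+1).factorial * r ^ m := by ring
      _ ≤ (((m+1:ℕ):ℝ) + 1) * ‖cpoch b (m+1)‖ / (m+1).factorial * r ^ m := by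
          gcongr
          linarith
      _ = (1 / r) * ((((m+1:ℕ):ℝ) + 1) * ‖cpoch b (m+1)‖ / (m+1).factorial * r ^ (m+1)) := by
          rw [pow_succ]; field_simp

lemma hasSum_one_sub_cpow (b : ℂ) {z : ℂ} (hz : ‖z‖ < 1) :
    HasSum (fun n : ℕ => cpoch b n / n.factorial * z ^ n) ((1 - z) ^ (-b)) := by
  classical
  set f : ℂ → ℂ := fun w => ∑' n : ℕ, cpoch b n / n.factorial * w ^ n with hfdef
  set g : ℂ → ℂ := fun w => ∑' n : ℕ, cpoch b (n + 1) / n.factorial * w ^ n with hgdef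
  have hsumf : ∀ {w : ℂ}, ‖w‖ < 1 →
      HasSum (fun n : ℕ => cpoch b n / n.factorial * w ^ n) (f w) :=
    fun {w} hw => ((summable_norm_term b hw).of_norm).hasSum
  have hsumg : ∀ {w : ℂ}, ‖w‖ < 1 →
      HasSum (fun n : ℕ => cpoch b (n + 1) / n.factorial * w ^ n) (g w) :=
    fun {w} hw => ((summable_norm_term' b hw).of_norm).hasSum
  have hfacp : ∀ n : ℕ, (((n+1).factorial : ℂ)) = ((n:ℂ) + 1) * (n.factorial : ℂ) := by
    intro n
    rw [Nat.factorial_succ]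
    push_cast
    ring
  have hfacne : ∀ n : ℕ, ((n.factorial : ℂ)) ≠ 0 := fun n => by
    exact_mod_cast Nat.cast_ne_zero.2 (Nat.factorial_ne_zero n)
  have hnne : ∀ n : ℕ, ((n : ℂ) + 1) ≠ 0 := by
    intro n h
    have h2 := congrArg Complex.re h
    simp only [Complex.add_re, Complex.natCast_re, Complex.one_re, Complex.zero_re] at h2
    have : (0:ℝ) ≤ (n:ℝ) := Nat.cast_nonneg n
    linarith
  have hfrac : ∀ n : ℕ, cpoch b (n + 1) / (((n + 1).factorial : ℂ)) * ((n : ℂ) + 1)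
      = cpoch b (n + 1) / (n.factorial : ℂ) := by
    intro n
    rw [hfacp n, div_mul_eq_mul_div, mul_comm ((n : ℂ) + 1) ((n.factorial : ℂ)),
      mul_div_mul_right _ _ (hnne n)]
  -- key algebraic identity : (1 - w) * g w = b * f w
  have key : ∀ w : ℂ, ‖w‖ < 1 → (1 - w) * g w = b * f w := by
    intro w hw
    have h1 : HasSum (fun n : ℕ => b * (cpoch b n / n.factorial * w ^ n)) (b * f w) :=
      (hsumf hw).mul_left b
    have h2 : HasSum (fun n : ℕ => w * (cpoch b (n + 1) / n.factorial * w ^ n)) (w * g w) :=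
      (hsumg hw).mul_left w
    have hfun : (fun n : ℕ => (fun m : ℕ => (m : ℂ) * (cpoch b m / m.factorial) * w ^ m) (n + 1))
        = fun n : ℕ => w * (cpoch b (n + 1) / n.factorial * w ^ n) := by
      funext n
      show ((n + 1 : ℕ) : ℂ) * (cpoch b (n + 1) / ((n+1).factorial : ℂ)) * w ^ (n + 1)
          = w * (cpoch b (n + 1) / n.factorial * w ^ n)
      have h := hfrac n
      push_cast
      rw [pow_succ]
      linear_combination (w ^ n * w) * h
    have h2' : HasSum (fun n : ℕ =>
        (fun m : ℕ => (m : ℂ) * (cpoch b m / m.factorial) * w ^ m) (n + 1)) (w * g w) := by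
      rw [hfun]; exact h2
    have h2'' : HasSum (fun m : ℕ => (m : ℂ) * (cpoch b m / m.factorial) * w ^ m)
        (w * g w + ∑ i ∈ Finset.range 1, (i : ℂ) * (cpoch b i / i.factorial) * w ^ i) :=
      (hasSum_nat_add_iff 1).1 h2'
    have h3 : HasSum (fun n : ℕ => b * (cpoch b n / n.factorial * w ^ n)
        + (n : ℂ) * (cpoch b n / n.factorial) * w ^ n)
        (b * f w + (w * g w + ∑ i ∈ Finset.range 1, (i : ℂ) * (cpoch b i / i.factorial) * w ^ i)) :=
      h1.add h2''
    have hfun2 : (fun n : ℕ => cpoch b (n + 1) / n.factorial * w ^ n)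
        = fun n : ℕ => b * (cpoch b n / n.factorial * w ^ n)
          + (n : ℂ) * (cpoch b n / n.factorial) * w ^ n := by
      funext n
      rw [cpoch_succ]
      ring
    have h4 : HasSum (fun n : ℕ => b * (cpoch b n / n.factorial * w ^ n)
        + (n : ℂ) * (cpoch b n / n.factorial) * w ^ n) (g w) := by
      rw [← hfun2]; exact hsumg hw
    have h5 := h4.unique h3
    simp only [Finset.range_one, Finset.sum_singleton, Nat.cast_zero, zero_mul, add_zero] at h5
    linear_combination h5
  -- derivative of f
  have hderiv : ∀ w : ℂ, ‖w‖ < 1 → HasDerivAt f (g w) w := by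
    intro w hw
    obtain ⟨r, hwr, hr1⟩ : ∃ r, ‖w‖ < r ∧ r < 1 := ⟨(‖w‖ + 1) / 2, by linarith, by linarith⟩
    have hr0 : 0 < r := lt_of_le_of_lt (norm_nonneg w) hwr
    have hball : w ∈ Metric.ball (0 : ℂ) r := mem_ball_zero_iff.2 hwr
    have humem : ∀ x ∈ Metric.ball (0 : ℂ) r, ‖x‖ < 1 := fun x hx =>
      lt_trans (mem_ball_zero_iff.1 hx) hr1
    have hu := summable_deriv_bound b hr0 hr1
    have hunif : TendstoUniformlyOn
        (fun N x => ∑ n ∈ Finset.range N, cpoch b n / n.factorial * ((n : ℂ) * x ^ (n - 1)))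
        (fun x => ∑' n : ℕ, cpoch b n / n.factorial * ((n : ℂ) * x ^ (n - 1)))
        atTop (Metric.ball (0 : ℂ) r) := by
      apply tendstoUniformlyOn_tsum_nat hu
      intro n x hx
      rw [norm_mul, norm_mul, norm_pow, Complex.norm_natCast]
      gcongr
      exact (mem_ball_zero_iff.1 hx).le
    have hds : ∀ᶠ (N : ℕ) in atTop, ∀ x ∈ Metric.ball (0:ℂ) r, HasDerivAt
        (fun x : ℂ => ∑ n ∈ Finset.range N, cpoch b n / n.factorial * x ^ n)
        (∑ n ∈ Finset.range N, cpoch b n / n.factorial * ((n:ℂ) * x ^ (n - 1))) x := by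
      filter_upwards with N x _
      apply HasDerivAt.fun_sum
      intro n _
      simpa [mul_comm, mul_assoc, mul_left_comm] using
        ((hasDerivAt_pow n x).const_mul (cpoch b n / (n.factorial : ℂ)))
    have hpt : ∀ x ∈ Metric.ball (0:ℂ) r, Tendsto
        (fun N => ∑ n ∈ Finset.range N, cpoch b n / n.factorial * x ^ n) atTop (𝓝 (f x)) :=
      fun x hx => (((summable_norm_term b (humem x hx)).of_norm).hasSum).tendsto_sum_nat
    have hd : HasDerivAt f (∑' n : ℕ, cpoch b n / n.factorial * ((n : ℂ) * w ^ (n - 1))) w :=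
      hasDerivAt_of_tendstoUniformlyOn Metric.isOpen_ball hunif hds hpt hball
    have hgs : HasSum (fun n : ℕ => cpoch b n / n.factorial * ((n : ℂ) * w ^ (n - 1))) (g w) := by
      have h0 : HasSum (fun n : ℕ =>
          (fun m : ℕ => cpoch b m / m.factorial * ((m : ℂ) * w ^ (m - 1))) (n + 1))
          (g w - ∑ i ∈ Finset.range 1,
            cpoch b i / i.factorial * ((i : ℂ) * w ^ (i - 1))) := by
        simp only [Finset.range_one, Finset.sum_singleton, Nat.cast_zero, zero_mul, mul_zero,
          sub_zero]
        have hfun : (fun n : ℕ =>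
            (fun m : ℕ => cpoch b m / m.factorial * ((m : ℂ) * w ^ (m - 1))) (n + 1))
            = fun n : ℕ => cpoch b (n + 1) / n.factorial * w ^ n := by
          funext n
          show cpoch b (n + 1) / ((n+1).factorial : ℂ) * (((n + 1 : ℕ) : ℂ) * w ^ ((n + 1) - 1))
              = cpoch b (n + 1) / n.factorial * w ^ n
          have h := hfrac n
          simp only [Nat.add_sub_cancel]
          push_cast
          linear_combination (w ^ n) * h
        rw [hfun]
        exact hsumg hw
      exact (hasSum_nat_add_iff' 1).1 h0
    rwa [hgs.tsum_eq] at hd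
  -- phi has zero derivative
  have hphi : ∀ w : ℂ, ‖w‖ < 1 → HasDerivAt (fun u : ℂ => f u * (1 - u) ^ b) 0 w := by
    intro w hw
    have h1w : (1 : ℂ) - w ≠ 0 := by
      intro h
      have : (1 : ℂ) = w := by linear_combination h
      rw [← this] at hw
      simp at hw
    have hre : 0 < (1 - w).re := by
      have := Complex.abs_re_le_norm w
      simp only [Complex.sub_re, Complex.one_re]
      have h2 : |w.re| < 1 := lt_of_le_of_lt (Complex.abs_re_le_norm w) hw
      have := abs_lt.1 h2
      linarith [this.2]
    have hslit : (1 : ℂ) - w ∈ Complex.slitPlane := Or.inl hre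
    have hd2 : HasDerivAt (fun u : ℂ => (1 - u) ^ b) (b * ((1:ℂ) - w) ^ (b - 1) * (-1)) w := by
      have hin : HasDerivAt (fun u : ℂ => 1 - u) (-1) w := (hasDerivAt_id w).const_sub 1
      exact hin.cpow_const hslit
    have hd1 := hderiv w hw
    have hmul := hd1.mul hd2
    have hzero : g w * ((1:ℂ) - w) ^ b + f w * (b * ((1:ℂ) - w) ^ (b - 1) * (-1)) = 0 := by
      have hpow : ((1:ℂ) - w) ^ b = ((1:ℂ) - w) ^ (b - 1) * ((1:ℂ) - w) := by
        have h := Complex.cpow_add (b - 1) 1 h1w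
        have hb : b - 1 + 1 = b := by ring
        rw [hb, Complex.cpow_one] at h
        exact h
      rw [hpow]
      have hkey := key w hw
      linear_combination ((1:ℂ) - w) ^ (b - 1) * hkey
    rw [hzero] at hmul
    exact hmul
  -- constancy
  have hconst : f z * (1 - z) ^ b = 1 := by
    have h0mem : (0 : ℂ) ∈ Metric.ball (0 : ℂ) 1 := by simp
    have hzmem : z ∈ Metric.ball (0 : ℂ) 1 := mem_ball_zero_iff.2 hz
    have hc := Convex.norm_image_sub_le_of_norm_hasDerivWithin_le
      (f := fun u : ℂ => f u * (1 - u) ^ b) (f' := fun _ => (0:ℂ)) (C := 0)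
      (s := Metric.ball (0 : ℂ) 1)
      (fun u hu => (hphi u (mem_ball_zero_iff.1 hu)).hasDerivWithinAt)
      (fun u _ => by simp) (convex_ball 0 1) h0mem hzmem
    simp only [norm_le_zero_iff, sub_eq_zero, zero_mul] at hc
    rw [hc]
    have hf0 : f 0 = 1 := by
      have h : ∑' n : ℕ, cpoch b n / n.factorial * (0:ℂ) ^ n
          = cpoch b 0 / (Nat.factorial 0 : ℂ) * (0:ℂ) ^ 0 := by
        apply tsum_eq_single 0
        intro n hn
        simp [zero_pow hn]
      show (∑' n : ℕ, cpoch b n / n.factorial * (0:ℂ) ^ n) = 1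
      rw [h]
      simp [cpoch]
    rw [hf0]
    simp
  have h1z : (1 : ℂ) - z ≠ 0 := by
    intro h
    have : (1 : ℂ) = z := by linear_combination h
    rw [← this] at hz
    simp at hz
  have hne : ((1:ℂ) - z) ^ b ≠ 0 := by
    rw [Ne, Complex.cpow_eq_zero_iff]
    tauto
  have hfz : f z = (1 - z) ^ (-b) := by
    rw [Complex.cpow_neg]
    exact eq_inv_of_mul_eq_one_left hconst
  exact hfz ▸ hsumf hz

lemma betaIntegral_Ioo (u v : ℂ) :
    ∫ t in Set.Ioo (0:ℝ) 1, (t:ℂ) ^ (u - 1) * (1 - (t:ℂ)) ^ (v - 1)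
      = Complex.betaIntegral u v := by
  rw [Complex.betaIntegral, intervalIntegral.integral_of_le zero_le_one,
    MeasureTheory.integral_Ioc_eq_integral_Ioo]

end AuxAppell

open Complex Filter MeasureTheory Set Topology in
set_option maxHeartbeats 1000000 in
/-- Euler integral representation of Appell's `F₁`: for `0 < Re a < Re c` and
`|x| < 1`, `|y| < 1`,
`F₁(a,b₁,b₂,c;x,y) = Γ(c)/(Γ(a)Γ(c-a)) ∫₀¹ t^{a-1}(1-t)^{c-a-1}(1-xt)^{-b₁}(1-yt)^{-b₂} dt`. -/
theorem stmt_19 (a b₁ b₂ c x y : ℂ)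
    (ha : 0 < a.re) (hac : a.re < c.re)
    (hx : ‖x‖ < 1) (hy : ‖y‖ < 1) :
    appellF1 a b₁ b₂ c x y =
      Complex.Gamma c / (Complex.Gamma a * Complex.Gamma (c - a)) *
        ∫ t in (0:ℝ)..1, (t : ℂ) ^ (a - 1) * (1 - (t : ℂ)) ^ (c - a - 1) *
          (1 - x * (t : ℂ)) ^ (-b₁) * (1 - y * (t : ℂ)) ^ (-b₂) := by
  have hc : 0 < c.re := lt_trans ha hac
  have hca : 0 < (c - a).re := by simp only [Complex.sub_re]; linarith
  have hx' : ‖x‖ < 1 := hx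
  have hy' : ‖y‖ < 1 := hy
  set K : ℕ × ℕ → ℂ := fun p => cpoch b₁ p.1 * cpoch b₂ p.2 /
    ((p.1.factorial : ℂ) * (p.2.factorial : ℂ)) * x ^ p.1 * y ^ p.2 with hK
  set G : ℕ × ℕ → ℝ → ℂ := fun p t =>
    K p * ((t:ℂ) ^ (a + ((p.1 + p.2 : ℕ) : ℂ) - 1) * (1 - (t:ℂ)) ^ (c - a - 1)) with hG
  have hup : ∀ p : ℕ × ℕ, 0 < (a + ((p.1 + p.2 : ℕ) : ℂ)).re := by
    intro p
    simp only [Complex.add_re, Complex.natCast_re]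
    have : (0:ℝ) ≤ ((p.1 + p.2 : ℕ) : ℝ) := Nat.cast_nonneg _
    linarith
  have hGint : ∀ p : ℕ × ℕ, MeasureTheory.IntegrableOn (G p) (Set.Ioo 0 1)
      MeasureTheory.volume := by
    intro p
    have h := (Complex.betaIntegral_convergent (hup p) hca).1
    exact (h.mono_set Set.Ioo_subset_Ioc_self).const_mul (K p)
  have hGval : ∀ p : ℕ × ℕ, (∫ t in Set.Ioo (0:ℝ) 1, G p t)
      = K p * Complex.betaIntegral (a + ((p.1 + p.2 : ℕ) : ℂ)) (c - a) := by
    intro p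
    simp only [hG]
    rw [MeasureTheory.integral_const_mul, betaIntegral_Ioo]
  -- dominating function
  set Dc : ℝ → ℂ := fun t =>
    (t:ℂ) ^ ((a.re : ℂ) - 1) * (1 - (t:ℂ)) ^ (((c - a).re : ℂ) - 1) with hDc
  have hDint : MeasureTheory.IntegrableOn Dc (Set.Ioo 0 1) MeasureTheory.volume := by
    have h := (Complex.betaIntegral_convergent (u := (a.re : ℂ)) (v := ((c - a).re : ℂ))
      (by simpa using ha) (by simpa using hca)).1
    exact h.mono_set Set.Ioo_subset_Ioc_self
  have hnormG : ∀ p : ℕ × ℕ, ∀ t ∈ Set.Ioo (0:ℝ) 1, ‖G p t‖ ≤ ‖K p‖ * ‖Dc t‖ := by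
    rintro p t ⟨ht0, ht1⟩
    have h1t : (0:ℝ) < 1 - t := by linarith
    have hcast : (1 : ℂ) - (t : ℂ) = (((1 - t : ℝ)) : ℂ) := by push_cast; ring
    have e1 : ‖(t:ℂ) ^ (a + ((p.1 + p.2 : ℕ) : ℂ) - 1)‖
        = t ^ (a.re - 1 + ((p.1 + p.2 : ℕ) : ℝ)) := by
      rw [Complex.norm_cpow_eq_rpow_re_of_pos ht0]
      congr 1
      simp only [Complex.sub_re, Complex.add_re, Complex.natCast_re, Complex.one_re]
      ring
    have e2 : ‖(1 - (t:ℂ)) ^ (c - a - 1)‖ = (1 - t) ^ ((c - a).re - 1) := by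
      rw [hcast, Complex.norm_cpow_eq_rpow_re_of_pos h1t]
      congr 1
    have eD : ‖Dc t‖ = t ^ (a.re - 1) * (1 - t) ^ ((c - a).re - 1) := by
      rw [hDc]
      rw [norm_mul, hcast,
        Complex.norm_cpow_eq_rpow_re_of_pos ht0, Complex.norm_cpow_eq_rpow_re_of_pos h1t]
      simp [Complex.sub_re, Complex.one_re, Complex.ofReal_re]
    have hple : t ^ (a.re - 1 + ((p.1 + p.2 : ℕ) : ℝ)) ≤ t ^ (a.re - 1) := by
      apply Real.rpow_le_rpow_of_exponent_ge ht0 ht1.le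
      have : (0:ℝ) ≤ ((p.1 + p.2 : ℕ) : ℝ) := Nat.cast_nonneg _
      linarith
    have eW : ‖(t:ℂ) ^ (a + ((p.1 + p.2 : ℕ) : ℂ) - 1) * (1 - (t:ℂ)) ^ (c - a - 1)‖
        = t ^ (a.re - 1 + ((p.1 + p.2 : ℕ) : ℝ)) * (1 - t) ^ ((c - a).re - 1) := by
      rw [norm_mul, e1, e2]
    calc ‖G p t‖ = ‖K p‖ * (t ^ (a.re - 1 + ((p.1 + p.2 : ℕ) : ℝ))
        * (1 - t) ^ ((c - a).re - 1)) := by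
          simp only [hG]
          rw [norm_mul, eW]
      _ ≤ ‖K p‖ * (t ^ (a.re - 1) * (1 - t) ^ ((c - a).re - 1)) := by
          apply mul_le_mul_of_nonneg_left _ (norm_nonneg _)
          apply mul_le_mul_of_nonneg_right hple
          positivity
      _ = ‖K p‖ * ‖Dc t‖ := by rw [eD]
  set B : ℝ := ∫ t in Set.Ioo (0:ℝ) 1, ‖Dc t‖ with hB
  have hint_norm_le : ∀ p : ℕ × ℕ, (∫ t in Set.Ioo (0:ℝ) 1, ‖G p t‖) ≤ ‖K p‖ * B := by
    intro p
    have h1 : (∫ t in Set.Ioo (0:ℝ) 1, ‖G p t‖)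
        ≤ ∫ t in Set.Ioo (0:ℝ) 1, ‖K p‖ * ‖Dc t‖ := by
      apply MeasureTheory.integral_mono_of_nonneg
      · exact Filter.Eventually.of_forall fun t => norm_nonneg _
      · exact (hDint.norm.const_mul _)
      · exact (MeasureTheory.ae_restrict_iff' measurableSet_Ioo).2
          (Filter.Eventually.of_forall fun t ht => hnormG p t ht)
    rwa [MeasureTheory.integral_const_mul] at h1
  have hsumK : Summable fun p : ℕ × ℕ => ‖K p‖ := by
    have h1 := (summable_norm_term b₁ hx').mul_norm (summable_norm_term b₂ hy')
    apply h1.congr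
    intro p
    apply congrArg norm
    rw [hK]
    ring
  have hsum_int_norm : Summable fun p : ℕ × ℕ => ∫ t in Set.Ioo (0:ℝ) 1, ‖G p t‖ := by
    refine Summable.of_nonneg_of_le (fun p => ?_) hint_norm_le (hsumK.mul_right B)
    exact MeasureTheory.integral_nonneg fun t => norm_nonneg _
  have hswap := MeasureTheory.integral_tsum_of_summable_integral_norm hGint hsum_int_norm
  have hHasSum : ∀ t ∈ Set.Ioo (0:ℝ) 1, HasSum (fun p : ℕ × ℕ => G p t)
      ((t:ℂ) ^ (a - 1) * (1 - (t:ℂ)) ^ (c - a - 1)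
        * (1 - x * (t:ℂ)) ^ (-b₁) * (1 - y * (t:ℂ)) ^ (-b₂)) := by
    rintro t ⟨ht0, ht1⟩
    have htp : ‖(t:ℂ)‖ = t := by
      rw [Complex.norm_real, Real.norm_eq_abs, abs_of_pos ht0]
    have hxt : ‖x * (t:ℂ)‖ < 1 := by
      rw [norm_mul, htp]
      calc ‖x‖ * t ≤ ‖x‖ * 1 := mul_le_mul_of_nonneg_left ht1.le (norm_nonneg x)
        _ = ‖x‖ := mul_one _
        _ < 1 := hx'
    have hyt : ‖y * (t:ℂ)‖ < 1 := by
      rw [norm_mul, htp]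
      calc ‖y‖ * t ≤ ‖y‖ * 1 := mul_le_mul_of_nonneg_left ht1.le (norm_nonneg y)
        _ = ‖y‖ := mul_one _
        _ < 1 := hy'
    have h1 := hasSum_one_sub_cpow b₁ hxt
    have h2 := hasSum_one_sub_cpow b₂ hyt
    have hsum2 : Summable (fun p : ℕ × ℕ =>
        (cpoch b₁ p.1 / p.1.factorial * (x * (t:ℂ)) ^ p.1)
          * (cpoch b₂ p.2 / p.2.factorial * (y * (t:ℂ)) ^ p.2)) :=
      summable_mul_of_summable_norm (R := ℂ)
        (f := fun n : ℕ => cpoch b₁ n / n.factorial * (x * (t:ℂ)) ^ n)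
        (g := fun n : ℕ => cpoch b₂ n / n.factorial * (y * (t:ℂ)) ^ n)
        (summable_norm_term b₁ hxt) (summable_norm_term b₂ hyt)
    have hs : HasSum (fun p : ℕ × ℕ =>
        (cpoch b₁ p.1 / p.1.factorial * (x * (t:ℂ)) ^ p.1)
          * (cpoch b₂ p.2 / p.2.factorial * (y * (t:ℂ)) ^ p.2))
        ((1 - x * (t:ℂ)) ^ (-b₁) * (1 - y * (t:ℂ)) ^ (-b₂)) := by
      have ht := tsum_mul_tsum_of_summable_norm (R := ℂ)
        (f := fun n : ℕ => cpoch b₁ n / n.factorial * (x * (t:ℂ)) ^ n)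
        (g := fun n : ℕ => cpoch b₂ n / n.factorial * (y * (t:ℂ)) ^ n)
        (summable_norm_term b₁ hxt) (summable_norm_term b₂ hyt)
      rw [h1.tsum_eq, h2.tsum_eq] at ht
      have h4 := hsum2.hasSum
      rwa [← ht] at h4
    have hs' := hs.mul_left ((t:ℂ) ^ (a - 1) * (1 - (t:ℂ)) ^ (c - a - 1))
    have hfe : (fun p : ℕ × ℕ => G p t) = fun p : ℕ × ℕ =>
        ((t:ℂ) ^ (a - 1) * (1 - (t:ℂ)) ^ (c - a - 1)) *
          ((cpoch b₁ p.1 / p.1.factorial * (x * t) ^ p.1)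
            * (cpoch b₂ p.2 / p.2.factorial * (y * t) ^ p.2)) := by
      funext p
      have ht0' : (t:ℂ) ≠ 0 := by
        exact_mod_cast ne_of_gt ht0
      have hcp : (t:ℂ) ^ (a + ((p.1 + p.2 : ℕ) : ℂ) - 1)
          = (t:ℂ) ^ (a - 1) * ((t:ℂ) ^ p.1 * (t:ℂ) ^ p.2) := by
        have h3 : a + ((p.1 + p.2 : ℕ) : ℂ) - 1 = (a - 1) + ((p.1 + p.2 : ℕ) : ℂ) := by ring
        rw [h3, Complex.cpow_add _ _ ht0', Complex.cpow_natCast, pow_add]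
      simp only [hG, hK]
      rw [hcp, mul_pow, mul_pow]
      ring
    rw [hfe]
    convert hs' using 1
    · rfl
    ring
  have hIoc : (∫ t in (0:ℝ)..1, (t:ℂ) ^ (a - 1) * (1 - (t:ℂ)) ^ (c - a - 1)
        * (1 - x * (t:ℂ)) ^ (-b₁) * (1 - y * (t:ℂ)) ^ (-b₂))
      = ∫ t in Set.Ioo (0:ℝ) 1, ∑' p : ℕ × ℕ, G p t := by
    rw [intervalIntegral.integral_of_le zero_le_one,
      MeasureTheory.integral_Ioc_eq_integral_Ioo]
    apply MeasureTheory.setIntegral_congr_fun measurableSet_Ioo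
    intro t ht
    exact ((hHasSum t ht).tsum_eq).symm
  have hterm : ∀ p : ℕ × ℕ,
      cpoch a (p.1 + p.2) * cpoch b₁ p.1 * cpoch b₂ p.2 /
        (cpoch c (p.1 + p.2) * (p.1.factorial : ℂ) * (p.2.factorial : ℂ)) * x ^ p.1 * y ^ p.2
      = Complex.Gamma c / (Complex.Gamma a * Complex.Gamma (c - a)) *
          (K p * Complex.betaIntegral (a + ((p.1 + p.2 : ℕ) : ℂ)) (c - a)) := by
    intro p
    have hbeta := Complex.Gamma_mul_Gamma_eq_betaIntegral (hup p) hca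
    rw [show a + ((p.1 + p.2 : ℕ) : ℂ) + (c - a) = c + ((p.1 + p.2 : ℕ) : ℂ) by ring] at hbeta
    rw [Gamma_add_nat ha, Gamma_add_nat hc] at hbeta
    have hga : Complex.Gamma a ≠ 0 := Complex.Gamma_ne_zero_of_re_pos ha
    have hgc : Complex.Gamma c ≠ 0 := Complex.Gamma_ne_zero_of_re_pos hc
    have hgca : Complex.Gamma (c - a) ≠ 0 := Complex.Gamma_ne_zero_of_re_pos hca
    have hpc : cpoch c (p.1 + p.2) ≠ 0 := cpoch_ne_zero hc _
    have hm : (p.1.factorial : ℂ) ≠ 0 := by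
      exact_mod_cast Nat.cast_ne_zero.2 (Nat.factorial_ne_zero p.1)
    have hn : (p.2.factorial : ℂ) ≠ 0 := by
      exact_mod_cast Nat.cast_ne_zero.2 (Nat.factorial_ne_zero p.2)
    have hbeta' : Complex.betaIntegral (a + ((p.1 + p.2 : ℕ) : ℂ)) (c - a)
        = cpoch a (p.1 + p.2) * Complex.Gamma a * Complex.Gamma (c - a)
          / (cpoch c (p.1 + p.2) * Complex.Gamma c) := by
      rw [eq_div_iff (mul_ne_zero hpc hgc)]
      linear_combination -hbeta
    rw [hbeta', hK]
    field_simp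
  calc appellF1 a b₁ b₂ c x y
      = ∑' p : ℕ × ℕ, Complex.Gamma c / (Complex.Gamma a * Complex.Gamma (c - a)) *
          (K p * Complex.betaIntegral (a + ((p.1 + p.2 : ℕ) : ℂ)) (c - a)) := by
        rw [appellF1]
        exact tsum_congr hterm
    _ = Complex.Gamma c / (Complex.Gamma a * Complex.Gamma (c - a)) *
          ∑' p : ℕ × ℕ, K p * Complex.betaIntegral (a + ((p.1 + p.2 : ℕ) : ℂ)) (c - a) :=
        tsum_mul_left
    _ = Complex.Gamma c / (Complex.Gamma a * Complex.Gamma (c - a)) *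
          ∑' p : ℕ × ℕ, ∫ t in Set.Ioo (0:ℝ) 1, G p t := by
        congr 1
        exact tsum_congr fun p => (hGval p).symm
    _ = Complex.Gamma c / (Complex.Gamma a * Complex.Gamma (c - a)) *
          ∫ t in Set.Ioo (0:ℝ) 1, ∑' p : ℕ × ℕ, G p t := by rw [hswap]
    _ = _ := by rw [← hIoc]
end
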